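/- arXiv:2006.12916 — 3 statements merged into one kernel-verified Lean document; each statement's English description precedes it below -/
import Mathlib

section
/- Let (X,E) be an expansive, (m,k)-departing rooted graph. Then there is C ≥ 1 such that for every x ∈ X and ξ ∈ J_∂(x): B_{θ_a}(ξ, C^{-1}e^{−a|x|}) ⊆ J^k_∂(x) ⊆ B_{θ_a}(ξ, Ce^{−a|x|}), where J^k_∂(x) := ⋃{ J_∂(y) : d_h(x,y) ≤ k }. -/
open SimpleGraph Metric
open scoped ENNReal ENat

noncomputable section

/-- A locally finite connected graph with a distinguished root. -/
structure RootedGraph (X : Type*) where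
  G : SimpleGraph X
  root : X
  conn : G.Connected
  locFin : ∀ x : X, {y | G.Adj x y}.Finite

namespace RootedGraph

variable {X : Type*} (R : RootedGraph X)

/-- The level `|x| = d(ϑ,x)` of a vertex. -/
def level (x : X) : ℕ := R.G.dist R.root x

/-- The horizontal subgraph: edges joining vertices of equal level. -/
def Gh : SimpleGraph X where
  Adj x y := R.G.Adj x y ∧ R.level x = R.level y
  symm := ⟨fun _ _ h => ⟨h.1.symm, h.2.symm⟩⟩
  loopless := ⟨fun x h => R.G.loopless.irrefl x h.1⟩

/-- The horizontal distance `d_h`, valued in `ℕ∞`. -/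
def dh (x y : X) : ℕ∞ := R.Gh.edist x y

/-- The `m`-th descendant set `J_m(x)`: vertices `y` with `|y| = |x| + m` lying
below `x` (i.e. `x` lies on a geodesic from the root to `y`). -/
def J (m : ℕ) (x : X) : Set X :=
  {y | R.level y = R.level x + m ∧ R.G.dist x y = m}

/-- `(m,k)`-departing property. -/
def Departing (m k : ℕ) : Prop :=
  ∀ x y : X, R.level x = R.level y → (k : ℕ∞) < R.dh x y →
    ∀ u ∈ R.J m x, ∀ v ∈ R.J m y, ((2 * k : ℕ) : ℕ∞) < R.dh u v

/-- Expansive property. -/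
def Expansive : Prop :=
  ∀ x y : X, R.level x = R.level y → (1 : ℕ∞) < R.dh x y →
    ∀ u ∈ R.J 1 x, ∀ v ∈ R.J 1 y, (1 : ℕ∞) < R.dh u v

/-- The Gromov product `(x|y)` with base point the root. -/
def gp (x y : X) : ℝ := ((R.level x : ℝ) + R.level y - R.G.dist x y) / 2

/-- Gromov hyperbolicity with respect to the root base point. -/
def Hyperbolic : Prop :=
  ∃ δ : ℝ, 0 ≤ δ ∧ ∀ x y z : X, min (R.gp x z) (R.gp z y) - δ ≤ R.gp x y

/-- A geodesic ray from the root. -/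
def IsRay (f : ℕ → X) : Prop := f 0 = R.root ∧ ∀ i, f (i + 1) ∈ R.J 1 (f i)

/-- The Gromov product of two rays: the (increasing) limit of `(x_i|y_i)`. -/
def gpRay (f g : ℕ → X) : ℝ≥0∞ := ⨆ i, ENNReal.ofReal (R.gp (f i) (g i))

/-- `|x ∨ y|_k = sup{ i : d_h(x_i,y_i) ≤ k }`. -/
def joinK (k : ℕ) (f g : ℕ → X) : ℝ≥0∞ :=
  ⨆ (i : ℕ) (_ : R.dh (f i) (g i) ≤ (k : ℕ∞)), (i : ℝ≥0∞)

/-- The Gromov product on a model `B` of the hyperbolic boundary, defined as the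
supremum over pairs of converging rays. -/
def gpB {B : Type*} (lim : (ℕ → X) → B) (ξ η : B) : ℝ≥0∞ :=
  ⨆ (f : ℕ → X) (g : ℕ → X)
    (_ : R.IsRay f ∧ R.IsRay g ∧ lim f = ξ ∧ lim g = η), R.gpRay f g

/-- `B` together with `lim` is a model of the hyperbolic boundary: every point is the
limit of a ray, and two rays have the same limit iff they are equivalent. -/
def BoundaryOf {B : Type*} (lim : (ℕ → X) → B) : Prop :=
  (∀ ξ : B, ∃ f, R.IsRay f ∧ lim f = ξ) ∧
    ∀ f g, R.IsRay f → R.IsRay g → (lim f = lim g ↔ R.gpRay f g = ⊤)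

/-- The metric on the boundary model is a Gromov metric:
`θ_a(ξ,η) ≍ e^{-a(ξ|η)}`. -/
def GromovLike {B : Type*} [MetricSpace B] (lim : (ℕ → X) → B) (a c₁ c₂ : ℝ) : Prop :=
  ∀ ξ η : B, ξ ≠ η →
    c₁ * Real.exp (-a * (R.gpB lim ξ η).toReal) ≤ dist ξ η ∧
      dist ξ η ≤ c₂ * Real.exp (-a * (R.gpB lim ξ η).toReal)

/-- The boundary cell `J_∂(x)`: boundary points reachable by rays through `x`. -/
def cell {B : Type*} (lim : (ℕ → X) → B) (x : X) : Set B :=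
  {ξ | ∃ f, R.IsRay f ∧ f (R.level x) = x ∧ lim f = ξ}

/-- The `k`-shadow `J^k_∂(x)`. -/
def shadow {B : Type*} (lim : (ℕ → X) → B) (k : ℕ) (x : X) : Set B :=
  ⋃ y ∈ {y | R.level y = R.level x ∧ R.dh x y ≤ (k : ℕ∞)}, R.cell lim y

/-- Bounded degree. -/
def BddDeg : Prop := ∃ D : ℕ, ∀ x : X, Set.ncard {y | R.G.Adj x y} ≤ D

/-- A vertical rooted graph: all edges join adjacent levels. -/
def Vertical : Prop :=
  ∀ x y : X, R.G.Adj x y → R.level x = R.level y + 1 ∨ R.level y = R.level x + 1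

/-- An index map on `(X,E_v)` over `M`. -/
def IsIndexMap {M : Type*} [MetricSpace M] (Φ : X → Set M) : Prop :=
  (∀ x, IsCompact (Φ x)) ∧ (∀ x, (Φ x).Nonempty) ∧
    (∀ x y, y ∈ R.J 1 x → Φ y ⊆ Φ x) ∧
    (∀ f, R.IsRay f → ∃ p, (⋂ i, Φ (f i)) = {p})

/-- The attractor of an index map. -/
def attractor {M : Type*} [MetricSpace M] (Φ : X → Set M) : Set M :=
  ⋂ n : ℕ, ⋃ x ∈ {x | R.level x = n}, Φ x

/-- Exponential type-(b): `diam Φ(x) ≤ δ₀ e^{-b|x|}`. -/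
def ExpType {M : Type*} [MetricSpace M] (Φ : X → Set M) (b δ₀ : ℝ) : Prop :=
  ∀ x, EMetric.diam (Φ x) ≤ ENNReal.ofReal (δ₀ * Real.exp (-b * R.level x))

/-- Condition `(S_b)`. -/
def CondS {M : Type*} [MetricSpace M] (Φ : X → Set M) (b : ℝ) : Prop :=
  ∀ c : ℝ, 0 < c → ∃ ℓ : ℕ, ∀ (n : ℕ) (F : Set M),
    EMetric.diam F < ENNReal.ofReal (c * Real.exp (-b * n)) →
      Set.ncard {x | R.level x = n ∧ ((Φ x ∩ R.attractor Φ) ∩ F).Nonempty} ≤ ℓ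

end RootedGraph

/-- Distance between two subsets of a metric space. -/
def setDist {M : Type*} [MetricSpace M] (s t : Set M) : ℝ :=
  sInf ((fun p : M × M => dist p.1 p.2) '' s ×ˢ t)

/-- The AI_b-graph on `X` associated to an index map `Φ`:
same root, same vertical edges, and horizontal edges between distinct equal-level
vertices whose index sets are `γe^{-bn}`-close. -/
def RootedGraph.IsAIb {X M : Type*} [MetricSpace M] (R R' : RootedGraph X)
    (Φ : X → Set M) (b γ : ℝ) : Prop :=
  R'.root = R.root ∧ ∀ x y : X, R'.G.Adj x y ↔
    (R.G.Adj x y ∨ (R.level x = R.level y ∧ x ≠ y ∧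
      setDist (Φ x) (Φ y) ≤ γ * Real.exp (-b * R.level x)))

/-- The AI_∞-graph on `X` associated to an index map `Φ`. -/
def RootedGraph.IsAIinf {X M : Type*} [MetricSpace M] (R R' : RootedGraph X)
    (Φ : X → Set M) : Prop :=
  R'.root = R.root ∧ ∀ x y : X, R'.G.Adj x y ↔
    (R.G.Adj x y ∨ (R.level x = R.level y ∧ x ≠ y ∧ (Φ x ∩ Φ y).Nonempty))

end

/-!
If two rays are more than `2k` apart horizontally at level `n`, the departing property doubles
their horizontal separation every `m` levels further out. Conversely, descending `m` levels
towards the root halves horizontal distances (departing), and moving along an edge changes an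
ancestor by at most one horizontal step (expansive). Projecting a geodesic between the points of
the two rays at level `i` onto a level `ℓ = n + rm` just below its lowest point, where the rays
are `2^r`-separated, shows that the geodesic has length at least `2(i - n) - K`, i.e.
`(f_i|g_i) ≤ n + K`.

Hence rays converging to `ξ` and `η` with `(ξ|η) > |x| + 2m + K` are `4k`-close at level
`|x| + 2m` and, after two departing steps, `k`-close at level `|x|`; with
`θ_a(ξ, η) ≍ e^{-a(ξ|η)}` this gives the inner ball. The outer ball is the estimate
`(ξ|η) ≥ |x| - k/2` for `ξ ∈ J_∂(x)`, `η ∈ J_∂(y)` and `d_h(x, y) ≤ k`.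
-/

namespace SimpleGraph

variable {V : Type*} {G : SimpleGraph V}

theorem exists_edist_le_edist_le {u v : V} {a b : ℕ} (h : G.edist u v ≤ a + b) :
    ∃ c, G.edist u c ≤ a ∧ G.edist c v ≤ b := by
  obtain ⟨p, hp⟩ := exists_walk_of_edist_ne_top (ne_top_of_le_ne_top (by simp) h)
  have hlen : p.length ≤ a + b := by exact_mod_cast hp ▸ h
  refine ⟨p.getVert a, (edist_le (p.take a)).trans ?_, (edist_le (p.drop a)).trans ?_⟩
  · simp
  · simp only [Walk.drop_length, Nat.cast_le]
    omega

theorem dist_le_of_edist_le {u v : V} {a : ℕ} (h : G.edist u v ≤ a) : G.dist u v ≤ a :=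
  ENat.toNat_le_of_le_natCast h

theorem Walk.exists_eq_append_cons_of_mem_darts {u v : V} {p : G.Walk u v} {d : G.Dart}
    (hd : d ∈ p.darts) :
    ∃ (p₁ : G.Walk u d.fst) (p₂ : G.Walk d.snd v), p = p₁.append (cons d.adj p₂) := by
  induction p with
  | nil => simp at hd
  | cons h q ih =>
    rw [darts_cons, List.mem_cons] at hd
    rcases hd with rfl | hd
    · exact ⟨nil, q, rfl⟩
    · obtain ⟨p₁, p₂, rfl⟩ := ih hd
      exact ⟨cons h p₁, p₂, rfl⟩

end SimpleGraph

open Finset in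
theorem sum_range_pow_div_le {m : ℕ} (hm : 0 < m) (N : ℕ) :
    ∑ j ∈ range N, (1 / 2 : ℝ) ^ (j / m) ≤ 2 * m := by
  have hblock : ∀ q, ∑ j ∈ range (m * q), (1 / 2 : ℝ) ^ (j / m) =
      m * ∑ i ∈ range q, (1 / 2 : ℝ) ^ i := by
    intro q
    induction q with
    | zero => simp
    | succ q ih =>
      have hdiv : ∀ x ∈ range m, (1 / 2 : ℝ) ^ ((m * q + x) / m) = (1 / 2) ^ q := by
        intro x hx
        rw [Nat.mul_add_div hm, Nat.div_eq_of_lt (mem_range.mp hx), add_zero]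
      rw [Nat.mul_succ, sum_range_add, ih, sum_congr rfl hdiv, sum_range_succ]
      simp only [sum_const, card_range, nsmul_eq_mul]
      ring
  calc ∑ j ∈ range N, (1 / 2 : ℝ) ^ (j / m)
      ≤ ∑ j ∈ range (m * N), (1 / 2 : ℝ) ^ (j / m) :=
        sum_le_sum_of_subset_of_nonneg (range_mono (Nat.le_mul_of_pos_left N hm))
          fun _ _ _ => by positivity
    _ = m * ∑ i ∈ range N, (1 / 2 : ℝ) ^ i := hblock N
    _ ≤ m * 2 := by gcongr; exact sum_geometric_two_le N
    _ = 2 * m := mul_comm _ _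

theorem mul_le_two_pow_add_sq_add (A r : ℕ) : A * r ≤ 2 ^ r + A ^ 2 + A := by
  have h₁ := Nat.two_mul_sq_add_one_le_two_pow_two_mul (r / 2)
  have h₂ : 2 ^ (2 * (r / 2)) ≤ 2 ^ r := Nat.pow_le_pow_right two_pos (Nat.mul_div_le r 2)
  calc A * r ≤ A * (2 * (r / 2) + 1) := Nat.mul_le_mul_left _ (by omega)
    _ = 2 * A * (r / 2) + A := by ring
    _ ≤ A ^ 2 + (r / 2) ^ 2 + A := by gcongr; exact two_mul_le_add_sq A (r / 2)
    _ ≤ 2 ^ r + A ^ 2 + A := by linarith [Nat.zero_le ((r / 2) ^ 2)]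

noncomputable def halvingWeight (m ℓ t : ℕ) : ℝ := (1 / 2 : ℝ) ^ ((t - ℓ) / m)

theorem halvingWeight_nonneg (m ℓ t : ℕ) : 0 ≤ halvingWeight m ℓ t := by
  unfold halvingWeight
  positivity

theorem halvingWeight_le_one (m ℓ t : ℕ) : halvingWeight m ℓ t ≤ 1 :=
  pow_le_one₀ (by norm_num) (by norm_num)

theorem halvingWeight_of_lt {m ℓ t : ℕ} (h : t < ℓ + m) : halvingWeight m ℓ t = 1 := by
  obtain rfl | hm := m.eq_zero_or_pos
  · simp [halvingWeight]
  rw [halvingWeight, Nat.div_eq_of_lt (by omega), pow_zero]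

theorem halvingWeight_add_self {m ℓ t : ℕ} (hm : 0 < m) (h : ℓ + m ≤ t) :
    halvingWeight m (ℓ + m) t = 2 * halvingWeight m ℓ t := by
  have : t - ℓ = t - (ℓ + m) + m := by omega
  rw [halvingWeight, halvingWeight, this, Nat.add_div_right _ hm, pow_succ]
  ring

open Finset in
theorem sum_Ico_halvingWeight_le {m : ℕ} (hm : 0 < m) (ℓ N : ℕ) :
    ∑ t ∈ Ico ℓ N, halvingWeight m ℓ t ≤ 2 * m := by
  rw [sum_Ico_eq_sum_range]
  simpa [halvingWeight] using sum_range_pow_div_le hm (N - ℓ)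

namespace RootedGraph

open SimpleGraph

variable {X : Type*} (R : RootedGraph X)

def IsAncestor (z u : X) : Prop := R.level z + R.G.dist z u = R.level u

noncomputable def walkWeight (ω : ℕ → ℝ) {u v : X} (w : R.G.Walk u v) : ℝ :=
  (w.darts.map fun d => ω (min (R.level d.fst) (R.level d.snd))).sum

theorem level_le_level_add_dist (u v : X) : R.level v ≤ R.level u + R.G.dist u v :=
  R.conn.dist_triangle

variable {R}

@[simp]
theorem level_root : R.level R.root = 0 := SimpleGraph.dist_self

theorem level_adj {u v : X} (h : R.G.Adj u v) :
    R.level v = R.level u ∨ R.level v = R.level u + 1 ∨ R.level u = R.level v + 1 := by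
  have := h.diff_dist_adj (u := R.root)
  unfold level
  omega

theorem mem_J_iff {t : ℕ} {z u : X} :
    u ∈ R.J t z ↔ R.IsAncestor z u ∧ R.level u = R.level z + t := by
  change _ ∧ _ ↔ _
  unfold IsAncestor
  omega

theorem isAncestor_root (u : X) : R.IsAncestor R.root u := by
  simp [IsAncestor, level]

theorem IsAncestor.refl (u : X) : R.IsAncestor u u := by
  simp [IsAncestor]

theorem IsAncestor.level_le {z u : X} (h : R.IsAncestor z u) : R.level z ≤ R.level u :=
  h ▸ Nat.le_add_right _ _

theorem IsAncestor.trans {z y u : X} (hzy : R.IsAncestor z y) (hyu : R.IsAncestor y u) :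
    R.IsAncestor z u := by
  have := R.conn.dist_triangle (u := z) (v := y) (w := u)
  have := R.level_le_level_add_dist z u
  unfold IsAncestor at *
  omega

theorem IsAncestor.eq_of_level_eq {z u : X} (h : R.IsAncestor z u)
    (hl : R.level z = R.level u) : z = u :=
  R.conn.dist_eq_zero_iff.mp (by unfold IsAncestor at h; omega)

theorem IsAncestor.exists_between {z u : X} (h : R.IsAncestor z u) {ℓ : ℕ}
    (hzℓ : R.level z ≤ ℓ) (hℓu : ℓ ≤ R.level u) :
    ∃ y, R.IsAncestor z y ∧ R.IsAncestor y u ∧ R.level y = ℓ := by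
  have hd : R.G.edist z u ≤ ↑(ℓ - R.level z) + ↑(R.level u - ℓ) := by
    rw [← (R.conn z u).coe_dist_eq_edist, ← Nat.cast_add, Nat.cast_le]
    unfold IsAncestor at h
    omega
  obtain ⟨y, hzy, hyu⟩ := exists_edist_le_edist_le hd
  have hzy := dist_le_of_edist_le hzy
  have hyu := dist_le_of_edist_le hyu
  have := R.level_le_level_add_dist z y
  have := R.level_le_level_add_dist y u
  have := R.conn.dist_triangle (u := z) (v := y) (w := u)
  refine ⟨y, ?_, ?_, ?_⟩ <;> unfold IsAncestor at * <;> omega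

theorem exists_isAncestor {u : X} {ℓ : ℕ} (hℓ : ℓ ≤ R.level u) :
    ∃ z, R.IsAncestor z u ∧ R.level z = ℓ := by
  obtain ⟨z, -, hzu, hz⟩ := (isAncestor_root u).exists_between (by simp) hℓ
  exact ⟨z, hzu, hz⟩

theorem isAncestor_of_adj {u v : X} (h : R.G.Adj u v) (hl : R.level v = R.level u + 1) :
    R.IsAncestor u v := by
  simp [IsAncestor, hl, dist_eq_one_iff_adj.mpr h]

theorem dist_le_of_dh_le {x y : X} {D : ℕ} (h : R.dh x y ≤ D) : R.G.dist x y ≤ D :=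
  dist_le_of_edist_le ((edist_anti (G := R.Gh) fun _ _ hab => hab.1).trans h)

theorem level_eq_of_dh_ne_top {x y : X} (h : R.dh x y ≠ ⊤) : R.level x = R.level y := by
  obtain ⟨w⟩ := reachable_of_edist_ne_top h
  clear h
  induction w with
  | nil => rfl
  | cons hadj _ ih => exact hadj.2.trans ih

theorem dh_le_one_of_adj {x y : X} (h : R.G.Adj x y) (hl : R.level x = R.level y) :
    R.dh x y ≤ 1 :=
  edist_le_one_iff_adj_or_eq.mpr (Or.inl ⟨h, hl⟩)

theorem IsRay.level_eq {f : ℕ → X} (hf : R.IsRay f) (i : ℕ) : R.level (f i) = i := by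
  induction i with
  | zero => simp [hf.1]
  | succ i ih => rw [(hf.2 i).1, ih]

theorem IsRay.isAncestor {f : ℕ → X} (hf : R.IsRay f) {i j : ℕ} (hij : i ≤ j) :
    R.IsAncestor (f i) (f j) := by
  induction j, hij using Nat.le_induction with
  | base => exact .refl _
  | succ j _ ih => exact ih.trans (mem_J_iff.mp (hf.2 j)).1

theorem IsRay.mem_J {f : ℕ → X} (hf : R.IsRay f) (i t : ℕ) : f (i + t) ∈ R.J t (f i) :=
  mem_J_iff.mpr ⟨hf.isAncestor (Nat.le_add_right i t), by simp [hf.level_eq]⟩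

theorem dh_le_one_of_isAncestor (hexp : R.Expansive) {u v z z' : X}
    (hl : R.level u = R.level v) (hd : R.dh u v ≤ 1) (hz : R.IsAncestor z u)
    (hz' : R.IsAncestor z' v) (hzl : R.level z = R.level z') : R.dh z z' ≤ 1 := by
  obtain ⟨t, ht⟩ : ∃ t, R.level u = R.level z + t := ⟨_, (Nat.add_sub_cancel' hz.level_le).symm⟩
  induction t generalizing u v with
  | zero => rwa [hz.eq_of_level_eq (by omega), hz'.eq_of_level_eq (by omega)]
  | succ t ih =>
    obtain ⟨p, hzp, hpu, hp⟩ := hz.exists_between (ℓ := R.level u - 1) (by omega) (by omega)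
    obtain ⟨p', hzp', hpu', hp'⟩ :=
      hz'.exists_between (ℓ := R.level v - 1) (by omega) (by omega)
    refine ih (by omega) ?_ hzp hzp' (by omega)
    by_contra hcon
    exact (hexp p p' (by omega) (not_le.mp hcon) u (mem_J_iff.mpr ⟨hpu, by omega⟩)
      v (mem_J_iff.mpr ⟨hpu', by omega⟩)).not_ge hd

theorem dh_le_one_of_isAncestor_of_isAncestor (hexp : R.Expansive) {u z z' : X}
    (hz : R.IsAncestor z u) (hz' : R.IsAncestor z' u) (hzl : R.level z = R.level z') :
    R.dh z z' ≤ 1 :=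
  dh_le_one_of_isAncestor hexp rfl (by simp [dh]) hz hz' hzl

theorem dh_le_one_of_adj_of_isAncestor (hexp : R.Expansive) {u v z z' : X}
    (h : R.G.Adj u v) (hz : R.IsAncestor z u) (hz' : R.IsAncestor z' v)
    (hzl : R.level z = R.level z') : R.dh z z' ≤ 1 := by
  rcases level_adj h with hl | hl | hl
  · exact dh_le_one_of_isAncestor hexp hl.symm (dh_le_one_of_adj h hl.symm) hz hz' hzl
  · exact dh_le_one_of_isAncestor_of_isAncestor hexp (hz.trans (isAncestor_of_adj h hl)) hz' hzl
  · exact dh_le_one_of_isAncestor_of_isAncestor hexp hz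
      (hz'.trans (isAncestor_of_adj h.symm hl)) hzl

section Departing

variable {m k : ℕ}

theorem dh_le_of_departing (hdep : R.Departing m k) {u v z z' : X}
    (hd : R.dh u v ≤ (2 * k : ℕ)) (hu : u ∈ R.J m z) (hv : v ∈ R.J m z') : R.dh z z' ≤ k := by
  have hl := level_eq_of_dh_ne_top (ne_top_of_le_ne_top (ENat.natCast_ne_top _) hd)
  by_contra hcon
  exact (hdep z z' (by rw [hu.1, hv.1] at hl; omega) (not_le.mp hcon) u hu v hv).not_ge hd

theorem dh_le_mul_of_departing (hdep : R.Departing m k) {u v z z' : X} {q : ℕ} (hq : 1 ≤ q)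
    (hd : R.dh u v ≤ (2 * k * q : ℕ)) (hu : u ∈ R.J m z) (hv : v ∈ R.J m z') :
    R.dh z z' ≤ (k * q : ℕ) := by
  induction q, hq using Nat.le_induction generalizing v z' with
  | base => simpa using dh_le_of_departing hdep (by simpa using hd) hu hv
  | succ q _ ih =>
    obtain ⟨c, huc, hcv⟩ := exists_edist_le_edist_le (a := 2 * k * q) (b := 2 * k)
      (hd.trans_eq (by push_cast; ring))
    have hlc := level_eq_of_dh_ne_top (ne_top_of_le_ne_top (ENat.natCast_ne_top _) huc)
    obtain ⟨ζ, hζ, hζl⟩ := exists_isAncestor (Nat.sub_le (R.level c) m)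
    have hc : c ∈ R.J m ζ := mem_J_iff.mpr ⟨hζ, by have := hu.1; omega⟩
    calc R.dh z z' ≤ R.dh z ζ + R.dh ζ z' := SimpleGraph.edist_triangle
      _ ≤ (k * q : ℕ) + k := add_le_add (ih huc hc) (dh_le_of_departing hdep hcv hc hv)
      _ = (k * (q + 1) : ℕ) := by push_cast; ring

theorem dh_le_half_of_departing (hk : 0 < k) (hdep : R.Departing m k) {u v z z' : X} {D : ℕ}
    (hd : R.dh u v ≤ D) (hu : u ∈ R.J m z) (hv : v ∈ R.J m z') :
    R.dh z z' ≤ ((D + 2 * k) / 2 : ℕ) := by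
  have hD : D ≤ 2 * k * (D / (2 * k) + 1) := (Nat.lt_mul_div_succ D (by omega)).le
  have hq : k * (D / (2 * k) + 1) ≤ (D + 2 * k) / 2 := by
    have := Nat.mul_div_le D (2 * k)
    rw [Nat.le_div_iff_mul_le two_pos]
    linarith
  exact (dh_le_mul_of_departing hdep le_add_self (hd.trans (by exact_mod_cast hD)) hu hv).trans
    (by exact_mod_cast hq)

theorem add_two_pow_le_dh (hk : 0 < k) (hdep : R.Departing m k) {f g : ℕ → X}
    (hf : R.IsRay f) (hg : R.IsRay g) {n : ℕ} (hsep : ((2 * k : ℕ) : ℕ∞) < R.dh (f n) (g n))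
    (r : ℕ) : ((2 * k + 2 ^ r : ℕ) : ℕ∞) ≤ R.dh (f (n + r * m)) (g (n + r * m)) := by
  induction r with
  | zero => simpa using (ENat.add_one_le_iff (ENat.natCast_ne_top _)).mpr hsep
  | succ r ih =>
    by_contra hcon
    obtain ⟨d, hd⟩ := ENat.ne_top_iff_exists.mp (ne_top_of_lt (not_le.mp hcon))
    have hlt : d < 2 * k + 2 ^ (r + 1) := by exact_mod_cast hd ▸ not_le.mp hcon
    have hstep : n + (r + 1) * m = n + r * m + m := by ring
    have hle := ih.trans <| dh_le_half_of_departing hk hdep (D := d) hd.symm.le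
      (hstep ▸ hf.mem_J (n + r * m) m) (hstep ▸ hg.mem_J (n + r * m) m)
    norm_cast at hle
    rw [pow_succ] at hlt
    omega

end Departing

section WalkWeight

variable {ω : ℕ → ℝ}

@[simp]
theorem walkWeight_nil {u : X} : R.walkWeight ω (Walk.nil : R.G.Walk u u) = 0 := rfl

@[simp]
theorem walkWeight_cons {u v x : X} (h : R.G.Adj u v) (w : R.G.Walk v x) :
    R.walkWeight ω (.cons h w) = ω (min (R.level u) (R.level v)) + R.walkWeight ω w := by
  simp [walkWeight]

@[simp]
theorem walkWeight_append {u v x : X} (w₁ : R.G.Walk u v) (w₂ : R.G.Walk v x) :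
    R.walkWeight ω (w₁.append w₂) = R.walkWeight ω w₁ + R.walkWeight ω w₂ := by
  simp [walkWeight]

@[simp]
theorem walkWeight_reverse {u v : X} (w : R.G.Walk u v) :
    R.walkWeight ω w.reverse = R.walkWeight ω w := by
  induction w with
  | nil => rfl
  | cons h q ih => simp [ih, min_comm, add_comm]

theorem walkWeight_nonneg (hω : ∀ t, 0 ≤ ω t) {u v : X} (w : R.G.Walk u v) :
    0 ≤ R.walkWeight ω w := by
  induction w with
  | nil => rfl
  | cons h q ih => simpa using add_nonneg (hω _) ih

theorem walkWeight_eq_mul {ω' : ℕ → ℝ} {c : ℝ} {u v : X} (w : R.G.Walk u v)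
    (hw : ∀ x ∈ w.support, ω (R.level x) = c * ω' (R.level x)) :
    R.walkWeight ω w = c * R.walkWeight ω' w := by
  induction w with
  | nil => simp
  | cons h q ih =>
    rename_i a b _
    have hmin : ω (min (R.level a) (R.level b)) = c * ω' (min (R.level a) (R.level b)) := by
      rcases min_choice (R.level a) (R.level b) with hm | hm <;> rw [hm]
      · exact hw a (by simp)
      · exact hw b (by simp)
    simp only [walkWeight_cons, hmin, ih fun x hx => hw x (by simp [hx])]
    ring

/-- Each level `t` between the end and the start of the walk is crossed by an edge whose weight
is `ω t` rather than at most `1`. -/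
theorem walkWeight_add_sum_le_length (hω : ∀ t, ω t ≤ 1) {u v : X} (w : R.G.Walk u v)
    (hw : ∀ x ∈ w.support, R.level v ≤ R.level x) :
    R.walkWeight ω w + ∑ t ∈ Finset.Ico (R.level v) (R.level u), (1 - ω t) ≤ w.length := by
  induction w with
  | nil => simp
  | cons h q ih =>
    rename_i a b c
    have hq := ih fun x hx => hw x (by simp [hx])
    have ha : R.level c ≤ R.level a := hw a (by simp)
    have hb : R.level c ≤ R.level b := hw b (by simp)
    rw [walkWeight_cons, Walk.length_cons, Nat.cast_succ]
    rcases level_adj h with hl | hl | hl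
    · rw [hl] at hq
      rw [hl, min_self]
      linarith [hω (R.level a)]
    · rw [hl, Finset.sum_Ico_succ_top ha] at hq
      rw [min_eq_left (by omega)]
      linarith [hω (R.level a)]
    · rw [hl, Finset.sum_Ico_succ_top hb, min_eq_right (by omega)]
      linarith

theorem walkWeight_add_sum_add_sum_le_length (hω : ∀ t, ω t ≤ 1) {u v x₀ : X}
    (w : R.G.Walk u v) (hx₀ : x₀ ∈ w.support)
    (hmin : ∀ x ∈ w.support, R.level x₀ ≤ R.level x) :
    R.walkWeight ω w + ∑ t ∈ Finset.Ico (R.level x₀) (R.level u), (1 - ω t)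
      + ∑ t ∈ Finset.Ico (R.level x₀) (R.level v), (1 - ω t) ≤ w.length := by
  obtain ⟨w₁, w₂, rfl⟩ := Walk.mem_support_iff_exists_append.mp hx₀
  have h₁ := walkWeight_add_sum_le_length hω w₁
    fun x hx => hmin x (Walk.support_subset_support_append_left _ _ hx)
  have h₂ := walkWeight_add_sum_le_length hω w₂.reverse
    fun x hx => hmin x (Walk.support_subset_support_append_right _ _ (by simpa using hx))
  rw [walkWeight_reverse, Walk.length_reverse] at h₂
  rw [walkWeight_append, Walk.length_append, Nat.cast_add]
  linarith

end WalkWeight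

variable {m k : ℕ}

/-- An edge with an endpoint below level `ℓ + m` moves the ancestor at level `ℓ` by one
horizontal step; a walk lying above `ℓ + m` is first projected to level `ℓ + m`, and the departing
property halves the result on the way down to `ℓ`. -/
theorem exists_dh_le_walkWeight (hexp : R.Expansive) (hdep : R.Departing m k) (hm : 0 < m)
    (hk : 0 < k) (ℓ : ℕ) {u v z z' : X} (w : R.G.Walk u v)
    (hw : ∀ x ∈ w.support, ℓ ≤ R.level x) (hz : R.IsAncestor z u) (hz' : R.IsAncestor z' v)
    (hzℓ : R.level z = ℓ) (hz'ℓ : R.level z' = ℓ) :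
    ∃ D : ℕ, R.dh z z' ≤ D ∧
      (D : ℝ) ≤ 2 * k + 4 + (2 * k + 5) * R.walkWeight (halvingWeight m ℓ) w := by
  by_cases hband : ∃ d ∈ w.darts, min (R.level d.fst) (R.level d.snd) < ℓ + m
  · obtain ⟨d, hd, hdℓ⟩ := hband
    obtain ⟨w₁, w₂, hsplit⟩ := Walk.exists_eq_append_cons_of_mem_darts hd
    obtain ⟨z₁, hz₁, hz₁ℓ⟩ :=
      exists_isAncestor (hw _ (Walk.dart_fst_mem_support_of_mem_darts _ hd))
    obtain ⟨z₂, hz₂, hz₂ℓ⟩ :=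
      exists_isAncestor (hw _ (Walk.dart_snd_mem_support_of_mem_darts _ hd))
    have hlen : w.length = w₁.length + 1 + w₂.length := by
      rw [hsplit, Walk.length_append, Walk.length_cons]
      ring
    rw [hsplit] at hw
    obtain ⟨D₁, hD₁, hD₁W⟩ := exists_dh_le_walkWeight hexp hdep hm hk ℓ w₁
      (fun x hx => hw x (Walk.support_subset_support_append_left _ _ hx)) hz hz₁ hzℓ hz₁ℓ
    obtain ⟨D₂, hD₂, hD₂W⟩ := exists_dh_le_walkWeight hexp hdep hm hk ℓ w₂
      (fun x hx => hw x (Walk.support_subset_support_append_right _ _ (by simp [hx])))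
      hz₂ hz' hz₂ℓ hz'ℓ
    have h₁₂ := dh_le_one_of_adj_of_isAncestor hexp d.adj hz₁ hz₂ (hz₁ℓ.trans hz₂ℓ.symm)
    refine ⟨D₁ + 1 + D₂, ?_, ?_⟩
    · calc R.dh z z' ≤ R.dh z z₁ + R.dh z₁ z₂ + R.dh z₂ z' :=
          SimpleGraph.edist_triangle.trans (add_le_add_left SimpleGraph.edist_triangle _)
        _ ≤ D₁ + 1 + D₂ := by gcongr
        _ = (D₁ + 1 + D₂ : ℕ) := by push_cast; rfl
    · rw [hsplit, walkWeight_append, walkWeight_cons, halvingWeight_of_lt hdℓ]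
      push_cast
      linarith
  by_cases hnil : w.Nil
  · obtain rfl := hnil.eq
    refine ⟨1, dh_le_one_of_isAncestor_of_isAncestor hexp hz hz' (hzℓ.trans hz'ℓ.symm), ?_⟩
    have := mul_nonneg (by positivity : (0 : ℝ) ≤ 2 * k + 5)
      (walkWeight_nonneg (halvingWeight_nonneg m ℓ) w)
    push_cast
    linarith
  push Not at hband
  have hhigh : ∀ x ∈ w.support, ℓ + m ≤ R.level x := by
    obtain ⟨_, h, q, rfl⟩ := Walk.not_nil_iff.mp hnil
    rw [← Walk.cons_map_snd_darts]
    intro x hx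
    rcases List.mem_cons.mp hx with rfl | hx
    · exact (hband _ List.mem_cons_self).trans (min_le_left _ _)
    · obtain ⟨d, hd, rfl⟩ := List.mem_map.mp hx
      exact (hband d hd).trans (min_le_right _ _)
  have hu := hhigh u w.start_mem_support
  obtain ⟨α, hα, hαℓ⟩ := exists_isAncestor hu
  obtain ⟨β, hβ, hβℓ⟩ := exists_isAncestor (hhigh v w.end_mem_support)
  obtain ⟨D', hD', hD'W⟩ :=
    exists_dh_le_walkWeight hexp hdep hm hk (ℓ + m) w hhigh hα hβ hαℓ hβℓ
  obtain ⟨ζ, hζ, hζℓ⟩ := exists_isAncestor (by omega : ℓ ≤ R.level α)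
  obtain ⟨ζ', hζ', hζ'ℓ⟩ := exists_isAncestor (by omega : ℓ ≤ R.level β)
  have hζζ' := dh_le_half_of_departing hk hdep hD' (mem_J_iff.mpr ⟨hζ, by omega⟩)
    (mem_J_iff.mpr ⟨hζ', by omega⟩)
  have hzζ := dh_le_one_of_isAncestor_of_isAncestor hexp hz (hζ.trans hα) (by omega)
  have hζ'z' := dh_le_one_of_isAncestor_of_isAncestor hexp (hζ'.trans hβ) hz' (by omega)
  refine ⟨1 + (D' + 2 * k) / 2 + 1, ?_, ?_⟩
  · calc R.dh z z' ≤ R.dh z ζ + R.dh ζ ζ' + R.dh ζ' z' :=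
        SimpleGraph.edist_triangle.trans (add_le_add_left SimpleGraph.edist_triangle _)
      _ ≤ 1 + ((D' + 2 * k) / 2 : ℕ) + 1 := by gcongr
      _ = (1 + (D' + 2 * k) / 2 + 1 : ℕ) := by push_cast; rfl
  · rw [walkWeight_eq_mul (c := 2) (ω' := halvingWeight m ℓ) _
      fun x hx => halvingWeight_add_self hm (hhigh x hx)] at hD'W
    have : (((D' + 2 * k) / 2 : ℕ) : ℝ) ≤ ((D' + 2 * k : ℕ) : ℝ) / 2 := Nat.cast_div_le
    push_cast at this ⊢
    linarith
termination_by (w.length, R.level u - ℓ)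
decreasing_by
  all_goals first
    | exact Prod.Lex.left _ _ (by omega)
    | exact Prod.Lex.right _ (by omega)

open Finset in
/-- A geodesic from `f i` to `g i` with lowest level `μ ≥ n` descends to `μ` and climbs back;
the weight of the rest of it pays, up to the factor `2k + 5`, for the separation `2^r` of the rays
at level `ℓ = n + rm ≤ μ`, and `2^r` outgrows the `2(μ - n) < 2m(r + 1)` it has to make up. -/
theorem exists_gp_le_of_dh_gt (hexp : R.Expansive) (hdep : R.Departing m k) (hm : 0 < m)
    (hk : 0 < k) :
    ∃ K : ℝ, 0 ≤ K ∧ ∀ ⦃f g : ℕ → X⦄, R.IsRay f → R.IsRay g → ∀ ⦃n : ℕ⦄,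
      ((2 * k : ℕ) : ℕ∞) < R.dh (f n) (g n) → ∀ i, R.gp (f i) (g i) ≤ n + K := by
  classical
  set C : ℝ := 2 * k + 5 with hC
  have hK : 0 ≤ 2 * m ^ 2 * C + 4 * m + 1 := by positivity
  refine ⟨2 * m ^ 2 * C + 4 * m + 1, hK, fun f g hf hg n hsep i => ?_⟩
  rw [gp, hf.level_eq, hg.level_eq]
  obtain ⟨w, hw⟩ := R.conn.exists_walk_length_eq_dist (f i) (g i)
  obtain ⟨x₀, hx₀, hmin⟩ := w.support.toFinset.exists_min_image R.level ⟨f i, by simp⟩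
  simp only [List.mem_toFinset] at hx₀ hmin
  set μ := R.level x₀
  have hμi : μ ≤ i := hf.level_eq i ▸ hmin _ w.start_mem_support
  have hcount : ∀ ω : ℕ → ℝ, (∀ t, ω t ≤ 1) →
      R.walkWeight ω w + 2 * ((i : ℝ) - μ - ∑ t ∈ Ico μ i, ω t) ≤ R.G.dist (f i) (g i) := by
    intro ω hω
    have := walkWeight_add_sum_add_sum_le_length hω w hx₀ hmin
    rw [hf.level_eq, hg.level_eq, sum_sub_distrib, sum_const, Nat.card_Ico, nsmul_one,
      Nat.cast_sub hμi] at this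
    rw [← hw]
    linarith
  rcases le_or_gt μ n with hμn | hnμ
  · have := hcount (fun _ => 0) fun _ => zero_le_one
    simp only [walkWeight, List.map_const', List.sum_replicate, smul_zero, sum_const_zero] at this
    have : (μ : ℝ) ≤ n := by exact_mod_cast hμn
    linarith
  set r := (μ - n) / m
  have hrm : r * m ≤ μ - n := Nat.div_mul_le_self _ _
  have hrm' : μ - n < r * m + m := Nat.lt_div_mul_add hm
  set ℓ := n + r * m
  have hℓμ : ℓ ≤ μ := by omega
  obtain ⟨D, hD, hDW⟩ := exists_dh_le_walkWeight hexp hdep hm hk ℓ w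
    (fun x hx => hℓμ.trans (hmin x hx)) (hf.isAncestor (by omega)) (hg.isAncestor (by omega))
    (hf.level_eq ℓ) (hg.level_eq ℓ)
  have hgrow : (2 * k + 2 ^ r : ℝ) ≤ D := by
    exact_mod_cast (add_two_pow_le_dh hk hdep hf hg hsep r).trans hD
  have hS : ∑ t ∈ Ico μ i, halvingWeight m ℓ t ≤ 2 * m :=
    (sum_le_sum_of_subset_of_nonneg (Ico_subset_Ico_left hℓμ)
      fun t _ _ => halvingWeight_nonneg m ℓ t).trans (sum_Ico_halvingWeight_le hm ℓ i)
  have hW := hcount _ (halvingWeight_le_one m ℓ)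
  have hA : ((2 * m * (2 * k + 5) * r : ℕ) : ℝ) ≤
      ((2 ^ r + (2 * m * (2 * k + 5)) ^ 2 + 2 * m * (2 * k + 5) : ℕ) : ℝ) := by
    exact_mod_cast mul_le_two_pow_add_sq_add _ r
  push_cast at hA
  have hμr : (μ : ℝ) ≤ n + r * m + m := by exact_mod_cast (by omega : μ ≤ n + r * m + m)
  have hC4 : (4 : ℝ) ≤ C := by linarith [(k.cast_nonneg : (0 : ℝ) ≤ k)]
  set E : ℝ := R.G.dist (f i) (g i) - 2 * ((i : ℝ) - μ)
  have hE : C * (2 * m * r) ≤ C * (1 + E + 6 * m + 4 * m ^ 2 * C) := by nlinarith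
  have := le_of_mul_le_mul_left hE (by linarith)
  linarith

theorem exists_lt_gp_of_lt_gpRay {f g : ℕ → X} {t : ℝ} (h : ENNReal.ofReal t < R.gpRay f g) :
    ∃ i, t < R.gp (f i) (g i) := by
  obtain ⟨i, hi⟩ := lt_iSup_iff.mp h
  exact ⟨i, (ENNReal.ofReal_lt_ofReal_iff'.mp hi).1⟩

theorem ofReal_gp_le_gpRay (f g : ℕ → X) (i : ℕ) :
    ENNReal.ofReal (R.gp (f i) (g i)) ≤ R.gpRay f g :=
  le_iSup (fun i => ENNReal.ofReal (R.gp (f i) (g i))) i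

theorem gpRay_le_gpB {B : Type*} (lim : (ℕ → X) → B) {f g : ℕ → X} (hf : R.IsRay f)
    (hg : R.IsRay g) : R.gpRay f g ≤ R.gpB lim (lim f) (lim g) :=
  le_iSup₂_of_le f g (le_iSup_of_le ⟨hf, hg, rfl, rfl⟩ le_rfl)

theorem exists_lt_gpRay_of_lt_gpB {B : Type*} {lim : (ℕ → X) → B} {ξ η : B} {t : ℝ≥0∞}
    (h : t < R.gpB lim ξ η) :
    ∃ f g, R.IsRay f ∧ R.IsRay g ∧ lim f = ξ ∧ lim g = η ∧ t < R.gpRay f g := by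
  simp only [gpB, lt_iSup_iff] at h
  obtain ⟨f, g, ⟨hf, hg, rfl, rfl⟩, h⟩ := h
  exact ⟨f, g, hf, hg, rfl, rfl, h⟩

theorem gpRay_eq_top_of_dist_le {f g : ℕ → X} (hf : R.IsRay f) (hg : R.IsRay g) {c : ℕ}
    (h : ∀ j, R.G.dist (f j) (g j) ≤ c) : R.gpRay f g = ⊤ := by
  refine ENNReal.eq_top_of_forall_nnreal_le fun r => ?_
  set j := ⌈(r : ℝ)⌉₊ + c
  have hgp : (r : ℝ) ≤ R.gp (f j) (g j) := by
    have h₁ := Nat.le_ceil (r : ℝ)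
    have h₂ : (R.G.dist (f j) (g j) : ℝ) ≤ c := by exact_mod_cast h j
    rw [gp, hf.level_eq, hg.level_eq]
    push_cast [j]
    linarith
  calc (r : ℝ≥0∞) = ENNReal.ofReal r := ENNReal.ofReal_coe_nnreal.symm
    _ ≤ ENNReal.ofReal (R.gp (f j) (g j)) := ENNReal.ofReal_le_ofReal hgp
    _ ≤ R.gpRay f g := ofReal_gp_le_gpRay f g j

variable (R) in
def GromovControl (k : ℕ) (K : ℝ) : Prop :=
  ∀ ⦃f g : ℕ → X⦄, R.IsRay f → R.IsRay g → ∀ n : ℕ,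
    ENNReal.ofReal (n + K) < R.gpRay f g → R.dh (f n) (g n) ≤ ((2 * k : ℕ) : ℕ∞)

theorem exists_gromovControl (hexp : R.Expansive) (hdep : R.Departing m k) (hm : 0 < m)
    (hk : 0 < k) : ∃ K, 0 ≤ K ∧ R.GromovControl k K := by
  obtain ⟨K, hK₀, hK⟩ := exists_gp_le_of_dh_gt hexp hdep hm hk
  refine ⟨K, hK₀, fun f g hf hg n h => ?_⟩
  obtain ⟨i, hi⟩ := exists_lt_gp_of_lt_gpRay h
  by_contra hcon
  exact (hK hf hg (not_le.mp hcon) i).not_gt hi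

namespace GromovControl

variable {K : ℝ}

theorem dh_le_of_gpRay_eq_top (hK : R.GromovControl k K) {f g : ℕ → X} (hf : R.IsRay f)
    (hg : R.IsRay g) (h : R.gpRay f g = ⊤) (n : ℕ) : R.dh (f n) (g n) ≤ ((2 * k : ℕ) : ℕ∞) :=
  hK hf hg n (h ▸ ENNReal.ofReal_lt_top)

theorem dh_le_of_lt_gpRay (hK : R.GromovControl k K) (hdep : R.Departing m k)
    {f f₀ g : ℕ → X} (hf : R.IsRay f) (hf₀ : R.IsRay f₀) (hg : R.IsRay g)
    (hff₀ : R.gpRay f f₀ = ⊤) {n : ℕ} (h : ENNReal.ofReal ((n + 2 * m : ℕ) + K) < R.gpRay f g) :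
    R.dh (f₀ n) (g n) ≤ k := by
  have h₄ : R.dh (f₀ (n + m + m)) (g (n + m + m)) ≤ (2 * k * 2 : ℕ) := by
    rw [add_assoc, ← two_mul]
    calc R.dh (f₀ (n + 2 * m)) (g (n + 2 * m))
        ≤ R.dh (f₀ (n + 2 * m)) (f (n + 2 * m)) + R.dh (f (n + 2 * m)) (g (n + 2 * m)) :=
          SimpleGraph.edist_triangle
      _ ≤ (2 * k : ℕ) + (2 * k : ℕ) := by
          gcongr
          · rw [dh, edist_comm]
            exact hK.dh_le_of_gpRay_eq_top hf hf₀ hff₀ _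
          · exact hK hf hg _ h
      _ = (2 * k * 2 : ℕ) := by push_cast; ring
  have h₂ := dh_le_mul_of_departing hdep one_le_two h₄ (hf₀.mem_J (n + m) m) (hg.mem_J (n + m) m)
  rw [mul_comm] at h₂
  exact dh_le_of_departing hdep h₂ (hf₀.mem_J n m) (hg.mem_J n m)

theorem eq_of_gpB_eq_top (hK : R.GromovControl k K) {B : Type*} {lim : (ℕ → X) → B}
    (hB : R.BoundaryOf lim) {ξ η : B} (h : R.gpB lim ξ η = ⊤) : ξ = η := by
  obtain ⟨f, hf, rfl⟩ := hB.1 ξ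
  obtain ⟨g, hg, rfl⟩ := hB.1 η
  refine (hB.2 f g hf hg).mpr
    (gpRay_eq_top_of_dist_le hf hg (c := 2 * k + 2 * k + 2 * k) fun j => ?_)
  obtain ⟨f', g', hf', hg', hff', hgg', hlt⟩ :=
    exists_lt_gpRay_of_lt_gpB (t := ENNReal.ofReal (j + K)) (h ▸ ENNReal.ofReal_lt_top)
  have h₁ := hK.dh_le_of_gpRay_eq_top hf hf' ((hB.2 f f' hf hf').mp hff'.symm) j
  have h₂ := hK hf' hg' j hlt
  have h₃ := hK.dh_le_of_gpRay_eq_top hg' hg ((hB.2 g' g hg' hg).mp hgg') j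
  refine dist_le_of_dh_le ?_
  calc R.dh (f j) (g j) ≤ R.dh (f j) (f' j) + R.dh (f' j) (g' j) + R.dh (g' j) (g j) :=
        SimpleGraph.edist_triangle.trans (add_le_add_left SimpleGraph.edist_triangle _)
    _ ≤ (2 * k : ℕ) + (2 * k : ℕ) + (2 * k : ℕ) := by gcongr
    _ = (2 * k + 2 * k + 2 * k : ℕ) := by push_cast; rfl

end GromovControl

section Boundary

open Real

variable {B : Type*} {lim : (ℕ → X) → B}

theorem IsRay.lim_mem_cell {g : ℕ → X} (hg : R.IsRay g) (i : ℕ) : lim g ∈ R.cell lim (g i) :=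
  ⟨g, hg, by rw [hg.level_eq], rfl⟩

theorem mem_shadow_of_mem_cell {x y : X} {η : B} (hl : R.level y = R.level x)
    (hd : R.dh x y ≤ k) (hη : η ∈ R.cell lim y) : η ∈ R.shadow lim k x :=
  Set.mem_biUnion (x := y) ⟨hl, hd⟩ hη

variable [MetricSpace B] {a c₁ c₂ : ℝ}

theorem lt_gpB_of_dist_lt (hθ : R.GromovLike lim a c₁ c₂) (ha : 0 < a) (hc₁ : 0 < c₁)
    {ξ η : B} (hne : ξ ≠ η) {t : ℝ} (ht : 0 ≤ t) (h : dist ξ η < c₁ * exp (-a * t)) :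
    ENNReal.ofReal t < R.gpB lim ξ η := by
  by_cases htop : R.gpB lim ξ η = ⊤
  · simp [htop]
  rw [ENNReal.ofReal_lt_iff_lt_toReal ht htop]
  have hexp := lt_of_mul_lt_mul_left ((hθ ξ η hne).1.trans_lt h) hc₁.le
  rw [exp_lt_exp] at hexp
  nlinarith

theorem dist_le_of_le_gpB (hθ : R.GromovLike lim a c₁ c₂) (ha : 0 ≤ a) (hc₂ : 0 ≤ c₂)
    {ξ η : B} (hne : ξ ≠ η) (htop : R.gpB lim ξ η ≠ ⊤) {t : ℝ}
    (h : ENNReal.ofReal t ≤ R.gpB lim ξ η) : dist ξ η ≤ c₂ * exp (-a * t) := by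
  have ht : t ≤ (R.gpB lim ξ η).toReal := by
    rcases le_or_gt t 0 with ht | ht
    · exact ht.trans ENNReal.toReal_nonneg
    · exact (ENNReal.ofReal_le_iff_le_toReal htop).mp h
  refine (hθ ξ η hne).2.trans (mul_le_mul_of_nonneg_left (exp_le_exp.mpr ?_) hc₂)
  nlinarith

variable {K : ℝ}

theorem GromovControl.ball_subset_shadow (hK : R.GromovControl k K) (hdep : R.Departing m k)
    (hK₀ : 0 ≤ K) (hB : R.BoundaryOf lim) (hθ : R.GromovLike lim a c₁ c₂) (ha : 0 < a)
    (hc₁ : 0 < c₁) {C : ℝ} (hC : c₁⁻¹ * exp (a * (2 * m + K)) ≤ C) {x : X} {ξ : B}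
    (hξ : ξ ∈ R.cell lim x) : Metric.ball ξ (C⁻¹ * exp (-a * R.level x)) ⊆ R.shadow lim k x := by
  intro η hη
  obtain ⟨f₀, hf₀, hf₀x, rfl⟩ := hξ
  by_cases heq : lim f₀ = η
  · exact heq ▸ mem_shadow_of_mem_cell rfl (by simp [dh]) ⟨f₀, hf₀, hf₀x, rfl⟩
  have hdist : dist (lim f₀) η < c₁ * exp (-a * ((R.level x + 2 * m : ℕ) + K)) := by
    have hCinv : C⁻¹ ≤ c₁ * exp (-(a * (2 * m + K))) := by
      rw [exp_neg, ← inv_inv c₁, ← mul_inv]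
      exact inv_anti₀ (by positivity) hC
    calc dist (lim f₀) η < C⁻¹ * exp (-a * R.level x) := by rw [_root_.dist_comm]; exact hη
      _ ≤ c₁ * exp (-(a * (2 * m + K))) * exp (-a * R.level x) := by gcongr
      _ = c₁ * exp (-a * ((R.level x + 2 * m : ℕ) + K)) := by
          rw [mul_assoc, ← exp_add]
          push_cast
          ring_nf
  obtain ⟨f, g, hf, hg, hfξ, rfl, hfg⟩ :=
    exists_lt_gpRay_of_lt_gpB (lt_gpB_of_dist_lt hθ ha hc₁ heq (by positivity) hdist)
  have hclose := hK.dh_le_of_lt_gpRay hdep hf hf₀ hg ((hB.2 f f₀ hf hf₀).mp hfξ) hfg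
  rw [hf₀x] at hclose
  exact mem_shadow_of_mem_cell (hg.level_eq _) hclose (hg.lim_mem_cell _)

theorem GromovControl.shadow_subset_ball (hK : R.GromovControl k K) (hB : R.BoundaryOf lim)
    (hθ : R.GromovLike lim a c₁ c₂) (ha : 0 < a) (hc₂ : 0 < c₂) {C : ℝ}
    (hC : c₂ * exp (a * k / 2) < C) {x : X} {ξ : B} (hξ : ξ ∈ R.cell lim x) :
    R.shadow lim k x ⊆ Metric.ball ξ (C * exp (-a * R.level x)) := by
  intro η hη
  obtain ⟨y, ⟨hyl, hxy⟩, g, hg, hgy, rfl⟩ := Set.mem_iUnion₂.mp hη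
  obtain ⟨f₀, hf₀, hf₀x, rfl⟩ := hξ
  rw [Metric.mem_ball, _root_.dist_comm]
  by_cases heq : lim f₀ = lim g
  · rw [heq, _root_.dist_self]
    have : 0 < c₂ * exp (a * k / 2) := by positivity
    have := exp_pos (-a * R.level x)
    nlinarith
  have hgp : ENNReal.ofReal (R.level x - k / 2) ≤ R.gpB lim (lim f₀) (lim g) := by
    have hdxy : (R.G.dist x y : ℝ) ≤ k := by exact_mod_cast dist_le_of_dh_le hxy
    calc ENNReal.ofReal (R.level x - k / 2) ≤ ENNReal.ofReal (R.gp x y) := by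
          apply ENNReal.ofReal_le_ofReal
          rw [gp, hyl]
          linarith
      _ = ENNReal.ofReal (R.gp (f₀ (R.level x)) (g (R.level x))) := by rw [hf₀x, ← hyl, hgy]
      _ ≤ R.gpRay f₀ g := ofReal_gp_le_gpRay f₀ g _
      _ ≤ R.gpB lim (lim f₀) (lim g) := gpRay_le_gpB lim hf₀ hg
  -- `GromovLike` reads `(ξ|η)` through `toReal`, which sends `⊤` to `0`.
  have htop : R.gpB lim (lim f₀) (lim g) ≠ ⊤ := fun h => heq (hK.eq_of_gpB_eq_top hB h)
  calc dist (lim f₀) (lim g) ≤ c₂ * exp (-a * (R.level x - k / 2)) :=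
        dist_le_of_le_gpB hθ ha.le hc₂.le heq htop hgp
    _ = c₂ * exp (a * k / 2) * exp (-a * R.level x) := by
        rw [mul_assoc, ← exp_add]
        ring_nf
    _ < C * exp (-a * R.level x) := by gcongr

end Boundary

end RootedGraph

theorem shadow_ball_inclusions_general {X B : Type*} [MetricSpace B] (R : RootedGraph X) (m k : ℕ)
    (hm : 0 < m) (hk : 0 < k) (hexp : R.Expansive) (hdep : R.Departing m k)
    (lim : (ℕ → X) → B) (hB : R.BoundaryOf lim)
    (a c₁ c₂ : ℝ) (ha : 0 < a) (hc₁ : 0 < c₁) (hc₂ : 0 < c₂)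
    (hθ : R.GromovLike lim a c₁ c₂) :
    ∃ C : ℝ, 1 ≤ C ∧ ∀ x : X, ∀ ξ ∈ R.cell lim x,
      Metric.ball ξ (C⁻¹ * Real.exp (-a * R.level x)) ⊆ R.shadow lim k x ∧
        R.shadow lim k x ⊆ Metric.ball ξ (C * Real.exp (-a * R.level x)) := by
  obtain ⟨K, hK₀, hK⟩ := RootedGraph.exists_gromovControl hexp hdep hm hk
  have h₁ : 0 ≤ c₁⁻¹ * Real.exp (a * (2 * m + K)) := by positivity
  have h₂ : 0 ≤ c₂ * Real.exp (a * k / 2) := by positivity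
  refine ⟨1 + c₁⁻¹ * Real.exp (a * (2 * m + K)) + c₂ * Real.exp (a * k / 2), by linarith,
    fun x ξ hξ => ⟨hK.ball_subset_shadow hdep hK₀ hB hθ ha hc₁ (by linarith) hξ,
      hK.shadow_subset_ball hB hθ ha hc₂ (by linarith) hξ⟩⟩

/-- Proposition 3.3: for an expansive `(m,k)`-departing rooted graph there
is `C ≥ 1` such that for all `x` and `ξ ∈ J_∂(x)`,
`B(ξ, C⁻¹e^{-a|x|}) ⊆ J^k_∂(x) ⊆ B(ξ, Ce^{-a|x|})`. -/
theorem shadow_ball_inclusions {X B : Type*} [MetricSpace B] (R : RootedGraph X) (m k : ℕ)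
    (hm : 0 < m) (hk : 0 < k) (hexp : R.Expansive) (hdep : R.Departing m k)
    (hne : ∀ x : X, (R.J 1 x).Nonempty)
    (lim : (ℕ → X) → B) (hB : R.BoundaryOf lim)
    (a c₁ c₂ : ℝ) (ha : 0 < a) (hc₁ : 0 < c₁) (hc₂ : 0 < c₂)
    (hθ : R.GromovLike lim a c₁ c₂) :
    ∃ C : ℝ, 1 ≤ C ∧ ∀ x : X, ∀ ξ ∈ R.cell lim x,
      Metric.ball ξ (C⁻¹ * Real.exp (-a * R.level x)) ⊆ R.shadow lim k x ∧
        R.shadow lim k x ⊆ Metric.ball ξ (C * Real.exp (-a * R.level x)) :=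
  shadow_ball_inclusions_general R m k hm hk hexp hdep lim hB a c₁ c₂ ha hc₁ hc₂ hθ
end

section
/- Let Φ be an index map on a vertical rooted graph (X,E_v) over a complete metric space (M,ρ), of exponential type-(b) (i.e., there is δ_0 with diam(Φ(x)) ≤ δ_0 e^{−b|x|} for all x). Then the associated AI_b-graph (X, E^{(b)}) with horizontal edges E^{(b)}_h = {(x,y) : |x|=|y|, x≠y, dist_ρ(Φ(x),Φ(y)) ≤ γ e^{−b|x|}} is (m,1)-departing for any integer m with (2γ+δ_0)e^{−bm} ≤ γ, and hence Gromov hyperbolic. -/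
open SimpleGraph Metric
open scoped ENNReal ENat

/-!
Index sets shrink like `e^{-b|x|}`, and two vertices of one level are horizontally adjacent
exactly when their index sets are `γe^{-b|x|}`-close. If `d_h(u, v) ≤ 2` for `m`-th descendants
`u, v` of `x, y`, then `Φ u, Φ v` are `(2γ + δ₀)e^{-b(|x| + m)}`-close, hence so are the larger
sets `Φ x, Φ y`; the choice of `m` makes this `≤ γe^{-b|x|}`, i.e. `d_h(x, y) ≤ 1`.

For hyperbolicity, `ρ(x, y) = dist(Φ x, Φ y) + e^{-b|x|} + e^{-b|y|}` is comparable to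
`e^{-b(x|y)}`: summing index-set diameters along a geodesic bounds `ρ` from above, and the
ancestors of `x, y` at the deepest level where their index sets are still close bound it from
below. As `ρ` satisfies the triangle inequality up to a factor `1 + δ₀`, so does `e^{-b(x|y)}`,
which is Gromov's condition.
-/

open Real

section SetDist

variable {M : Type*} [MetricSpace M] {A B C A' B' : Set M} {p q : M}

lemma setDist_bddBelow (A B : Set M) :
    BddBelow ((fun p : M × M => dist p.1 p.2) '' A ×ˢ B) :=
  ⟨0, by rintro _ ⟨_, -, rfl⟩; exact dist_nonneg⟩

lemma setDist_nonneg (A B : Set M) : 0 ≤ setDist A B :=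
  Real.sInf_nonneg (by rintro _ ⟨_, -, rfl⟩; exact dist_nonneg)

lemma setDist_le_dist (hp : p ∈ A) (hq : q ∈ B) : setDist A B ≤ dist p q :=
  csInf_le (setDist_bddBelow A B) ⟨(p, q), ⟨hp, hq⟩, rfl⟩

lemma le_setDist {r : ℝ} (hA : A.Nonempty) (hB : B.Nonempty)
    (h : ∀ a ∈ A, ∀ c ∈ B, r ≤ dist a c) : r ≤ setDist A B :=
  le_csInf ((hA.prod hB).image _) <| by
    rintro _ ⟨⟨a, c⟩, ⟨ha, hc⟩, rfl⟩
    exact h a ha c hc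

lemma setDist_anti (hA : A.Nonempty) (hB : B.Nonempty) (hAA' : A ⊆ A') (hBB' : B ⊆ B') :
    setDist A' B' ≤ setDist A B :=
  le_setDist hA hB fun _ ha _ hc => setDist_le_dist (hAA' ha) (hBB' hc)

lemma dist_le_setDist_add {dA dB : ℝ} (hp : p ∈ A) (hq : q ∈ B)
    (hdA : ∀ a ∈ A, dist p a ≤ dA) (hdB : ∀ c ∈ B, dist q c ≤ dB) :
    dist p q ≤ setDist A B + dA + dB := by
  have := le_setDist ⟨p, hp⟩ ⟨q, hq⟩ fun a ha c hc =>
    show dist p q - dA - dB ≤ dist a c by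
      linarith [dist_triangle4 p a c q, hdA a ha, hdB c hc, dist_comm c q]
  linarith

lemma setDist_triangle {d : ℝ} (hA : A.Nonempty) (hB : B.Nonempty) (hC : C.Nonempty)
    (hdB : ∀ q ∈ B, ∀ q' ∈ B, dist q q' ≤ d) :
    setDist A C ≤ setDist A B + setDist B C + d := by
  have h : ∀ q' ∈ B, ∀ r ∈ C, setDist A C - d - dist q' r ≤ setDist A B :=
    fun q' hq' r hr => le_setDist hA hB fun p hp q hq => by
      linarith [setDist_le_dist hp hr, dist_triangle4 p q q' r, hdB q hq q' hq']
  have := le_setDist hB hC fun q' hq' r hr =>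
    show setDist A C - d - setDist A B ≤ dist q' r by linarith [h q' hq' r hr]
  linarith

end SetDist

namespace RootedGraph

variable {X : Type*}

section Geometry

variable (S : RootedGraph X)

lemma level_le_level_add_dist_s12 (x y : X) : S.level y ≤ S.level x + S.G.dist x y :=
  S.conn.dist_triangle

lemma gp_le_level_left (x y : X) : S.gp x y ≤ S.level x := by
  have : (S.level y : ℝ) ≤ S.level x + S.G.dist x y := mod_cast S.level_le_level_add_dist_s12 x y
  rw [gp]
  linarith

lemma gp_le_level_right (x y : X) : S.gp x y ≤ S.level y := by
  have : (S.level x : ℝ) ≤ S.level y + S.G.dist x y := by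
    rw [SimpleGraph.dist_comm]
    exact_mod_cast S.level_le_level_add_dist_s12 y x
  rw [gp]
  linarith

lemma gp_nonneg (x y : X) : 0 ≤ S.gp x y := by
  have h : S.G.dist x y ≤ S.level x + S.level y := by
    rw [level, level, SimpleGraph.dist_comm (u := S.root) (v := x)]
    exact S.conn.dist_triangle
  have : (S.G.dist x y : ℝ) ≤ S.level x + S.level y := mod_cast h
  rw [gp]
  linarith

lemma exists_ancestor {x : X} {k : ℕ} (hk : k ≤ S.level x) :
    ∃ z, S.level z = k ∧ x ∈ S.J (S.level x - k) z := by
  obtain ⟨w, hw⟩ := S.conn.exists_walk_length_eq_dist S.root x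
  have h₁ : S.level (w.getVert k) ≤ k :=
    (SimpleGraph.dist_le (w.take k)).trans (by simp [Walk.take_length])
  have h₂ : S.G.dist (w.getVert k) x ≤ S.level x - k :=
    (SimpleGraph.dist_le (w.drop k)).trans (by simp [Walk.drop_length, hw, level])
  have h₃ := S.level_le_level_add_dist_s12 (w.getVert k) x
  exact ⟨w.getVert k, by omega, by omega, by omega⟩

theorem hyperbolic_of_exp_neg_gp_le {b K : ℝ} (hb : 0 < b)
    (h : ∀ x y z, exp (-b * S.gp x y) ≤ K * (exp (-b * S.gp x z) + exp (-b * S.gp z y))) :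
    S.Hyperbolic := by
  have hK : 0 < K := by
    have := h S.root S.root S.root
    nlinarith [exp_pos (-b * S.gp S.root S.root)]
  -- `δ = 2K/b` works because `2K ≤ e^{2K}`.
  refine ⟨2 * K / b, by positivity, fun x y z => ?_⟩
  set μ := min (S.gp x z) (S.gp z y)
  have hμ : exp (-b * S.gp x y) ≤ 2 * K * exp (-b * μ) :=
    calc exp (-b * S.gp x y) ≤ K * (exp (-b * S.gp x z) + exp (-b * S.gp z y)) := h x y z
      _ ≤ K * (exp (-b * μ) + exp (-b * μ)) := by
        have h₁ : -b * S.gp x z ≤ -b * μ := by nlinarith [min_le_left (S.gp x z) (S.gp z y)]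
        have h₂ : -b * S.gp z y ≤ -b * μ := by nlinarith [min_le_right (S.gp x z) (S.gp z y)]
        gcongr
      _ = 2 * K * exp (-b * μ) := by ring
  by_contra! hlt
  have hgap : 2 * K - b * μ < -b * S.gp x y := by
    have := mul_lt_mul_of_pos_left hlt hb
    rw [mul_sub, mul_div_cancel₀ _ hb.ne'] at this
    linarith
  have : exp (2 * K) * exp (-b * μ) < exp (-b * S.gp x y) := by
    rw [← exp_add]
    exact exp_lt_exp.2 (by linarith)
  nlinarith [add_one_le_exp (2 * K), exp_pos (-b * μ)]

end Geometry

variable {M : Type*} [MetricSpace M] {R R' : RootedGraph X} {Φ : X → Set M} {b γ δ₀ : ℝ}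

lemma IsIndexMap.subset_of_adj (hΦ : R.IsIndexMap Φ) {a c : X} (h : R.G.Adj a c)
    (hl : R.level c = R.level a + 1) : Φ c ⊆ Φ a :=
  hΦ.2.2.1 a c ⟨hl, SimpleGraph.dist_eq_one_iff_adj.2 h⟩

lemma ExpType.dist_le (hexp : R.ExpType Φ b δ₀) (hδ₀ : 0 ≤ δ₀) {x : X} {p q : M}
    (hp : p ∈ Φ x) (hq : q ∈ Φ x) : dist p q ≤ δ₀ * exp (-b * R.level x) :=
  (edist_le_ofReal (by positivity)).1 ((Metric.edist_le_ediam_of_mem hp hq).trans (hexp x))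

variable (R Φ b) in
noncomputable def quasiDist (x y : X) : ℝ :=
  setDist (Φ x) (Φ y) + exp (-b * R.level x) + exp (-b * R.level y)

lemma quasiDist_le_mul_add (hΦ : R.IsIndexMap Φ) (hexp : R.ExpType Φ b δ₀)
    (hδ₀ : 0 ≤ δ₀) (x y z : X) :
    R.quasiDist Φ b x y ≤ (1 + δ₀) * (R.quasiDist Φ b x z + R.quasiDist Φ b z y) := by
  have htri := setDist_triangle (hΦ.2.1 x) (hΦ.2.1 z) (hΦ.2.1 y)
    fun _ hq _ hq' => hexp.dist_le hδ₀ hq hq'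
  have hxz := setDist_nonneg (Φ x) (Φ z)
  have hzy := setDist_nonneg (Φ z) (Φ y)
  have := exp_pos (-b * R.level x)
  have := exp_pos (-b * R.level y)
  have := exp_pos (-b * R.level z)
  simp only [quasiDist]
  nlinarith

end RootedGraph

lemma one_sub_exp_neg_pos {b : ℝ} (hb : 0 < b) : 0 < 1 - exp (-b) :=
  sub_pos.2 (exp_lt_one_iff.2 (neg_lt_zero.2 hb))

namespace RootedGraph.IsAIb

variable {X M : Type*} [MetricSpace M] {R R' : RootedGraph X} {Φ : X → Set M} {b γ δ₀ : ℝ}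

lemma level_le_of_adj (hA : R.IsAIb R' Φ b γ) (hvert : R.Vertical) {a c : X}
    (h : R'.G.Adj a c) : R.level c ≤ R.level a + 1 := by
  rcases (hA.2 a c).1 h with h' | ⟨hl, -, -⟩
  · rcases hvert a c h' with hl | hl <;> omega
  · omega

lemma level_le_add_length (hA : R.IsAIb R' Φ b γ) (hvert : R.Vertical) {a c : X}
    (w : R'.G.Walk a c) : R.level c ≤ R.level a + w.length := by
  induction w with
  | nil => simp
  | cons h _ ih =>
    have := hA.level_le_of_adj hvert h
    rw [Walk.length_cons]
    omega

lemma level_eq (hA : R.IsAIb R' Φ b γ) (hvert : R.Vertical) (x : X) :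
    R'.level x = R.level x := by
  have hle : R.G ≤ R'.G := fun a c h => (hA.2 a c).2 (Or.inl h)
  have h₁ : R'.level x ≤ R.level x := by
    rw [level, level, hA.1]
    exact (R.conn R.root x).dist_anti hle
  obtain ⟨w, hw⟩ := R'.conn.exists_walk_length_eq_dist R'.root x
  have h₂ := hA.level_le_add_length hvert w
  have h₀ : R.level R'.root = 0 := by rw [hA.1, level, SimpleGraph.dist_self]
  have : R'.level x = w.length := hw.symm
  omega

lemma gh_adj_iff (hA : R.IsAIb R' Φ b γ) (hvert : R.Vertical) {x y : X} :
    R'.Gh.Adj x y ↔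
      R.level x = R.level y ∧ x ≠ y ∧
        setDist (Φ x) (Φ y) ≤ γ * exp (-b * R.level x) := by
  change R'.G.Adj x y ∧ R'.level x = R'.level y ↔ _
  rw [hA.2, hA.level_eq hvert, hA.level_eq hvert]
  constructor
  · rintro ⟨hR | h, hl⟩
    · rcases hvert x y hR with h | h <;> omega
    · exact h
  · exact fun h => ⟨Or.inr h, h.1⟩

lemma subset_of_walk (hA : R.IsAIb R' Φ b γ) (hvert : R.Vertical) (hΦ : R.IsIndexMap Φ)
    {a c : X} (w : R'.G.Walk a c) (h : R.level c = R.level a + w.length) : Φ c ⊆ Φ a := by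
  induction w with
  | nil => exact subset_rfl
  | @cons a z c hadj w ih =>
    have h₁ := hA.level_le_add_length hvert w
    have h₂ := hA.level_le_of_adj hvert hadj
    rw [Walk.length_cons] at h
    have hz : R.level z = R.level a + 1 := by omega
    have hR : R.G.Adj a z := by
      rcases (hA.2 a z).1 hadj with h' | ⟨hl, -, -⟩
      · exact h'
      · omega
    exact (ih (by omega)).trans (hΦ.subset_of_adj hR hz)

lemma subset_of_mem_J (hA : R.IsAIb R' Φ b γ) (hvert : R.Vertical) (hΦ : R.IsIndexMap Φ)
    {m : ℕ} {x u : X} (hu : u ∈ R'.J m x) : Φ u ⊆ Φ x := by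
  obtain ⟨hl, hd⟩ := hu
  obtain ⟨w, hw⟩ := R'.conn.exists_walk_length_eq_dist x u
  refine hA.subset_of_walk hvert hΦ w ?_
  rwa [← hA.level_eq hvert, ← hA.level_eq hvert, hw, hd]

lemma setDist_le_of_not_two_lt_dh (hA : R.IsAIb R' Φ b γ) (hvert : R.Vertical)
    (hΦ : R.IsIndexMap Φ) (hγ : 0 ≤ γ) (hδ₀ : 0 ≤ δ₀) (hexp : R.ExpType Φ b δ₀)
    {u v : X} (h : ¬ 2 < R'.dh u v) :
    setDist (Φ u) (Φ v) ≤ (2 * γ + δ₀) * exp (-b * R.level u) := by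
  have hE := exp_pos (-b * R.level u)
  rw [dh, two_lt_edist_iff] at h
  push Not at h
  rcases eq_or_ne u v with rfl | hne
  · obtain ⟨p, hp⟩ := hΦ.2.1 u
    have := setDist_le_dist hp hp
    rw [_root_.dist_self] at this
    nlinarith
  by_cases hadj : R'.Gh.Adj u v
  · have := ((hA.gh_adj_iff hvert).1 hadj).2.2
    nlinarith
  obtain ⟨z, hz⟩ := h hne hadj
  rw [mem_commonNeighbors] at hz
  obtain ⟨hlz, -, huz⟩ := (hA.gh_adj_iff hvert).1 hz.1
  obtain ⟨-, -, hzv⟩ := (hA.gh_adj_iff hvert).1 hz.2.symm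
  have := setDist_triangle (hΦ.2.1 u) (hΦ.2.1 z) (hΦ.2.1 v)
    fun _ hq _ hq' => hexp.dist_le hδ₀ hq hq'
  rw [← hlz] at hzv this
  nlinarith

theorem departing (hA : R.IsAIb R' Φ b γ) (hvert : R.Vertical) (hΦ : R.IsIndexMap Φ)
    (hγ : 0 ≤ γ) (hδ₀ : 0 ≤ δ₀) (hexp : R.ExpType Φ b δ₀) {m : ℕ}
    (hmb : (2 * γ + δ₀) * exp (-b * m) ≤ γ) : R'.Departing m 1 := by
  intro x y hxy hdh u hu v hv
  by_contra hle
  have hlu : R.level u = R.level x + m := by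
    have := hu.1
    rwa [hA.level_eq hvert, hA.level_eq hvert] at this
  have hclose : setDist (Φ x) (Φ y) ≤ γ * exp (-b * R.level x) :=
    calc setDist (Φ x) (Φ y) ≤ setDist (Φ u) (Φ v) :=
          setDist_anti (hΦ.2.1 u) (hΦ.2.1 v) (hA.subset_of_mem_J hvert hΦ hu)
            (hA.subset_of_mem_J hvert hΦ hv)
      _ ≤ (2 * γ + δ₀) * exp (-b * R.level u) :=
          hA.setDist_le_of_not_two_lt_dh hvert hΦ hγ hδ₀ hexp (by simpa using hle)
      _ = (2 * γ + δ₀) * exp (-b * m) * exp (-b * R.level x) := by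
          rw [hlu, mul_assoc, ← exp_add]
          push_cast
          ring_nf
      _ ≤ γ * exp (-b * R.level x) := by gcongr
  refine hdh.not_ge (edist_le_one_iff_adj_or_eq.2 ?_)
  rcases eq_or_ne x y with rfl | hne
  · exact Or.inr rfl
  · rw [hA.level_eq hvert, hA.level_eq hvert] at hxy
    exact Or.inl ((hA.gh_adj_iff hvert).2 ⟨hxy, hne, hclose⟩)

lemma dist_le_of_adj (hA : R.IsAIb R' Φ b γ) (hvert : R.Vertical) (hΦ : R.IsIndexMap Φ)
    (hb : 0 ≤ b) (hγ : 0 ≤ γ) (hδ₀ : 0 ≤ δ₀) (hexp : R.ExpType Φ b δ₀) {a c : X}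
    (hac : R'.G.Adj a c) {p q : M} (hp : p ∈ Φ a) (hq : q ∈ Φ c) :
    dist p q ≤ (γ + 2 * δ₀) * exp b * exp (-b * R.level a) := by
  have hlift : (γ + 2 * δ₀) * exp (-b * R.level a) ≤
      (γ + 2 * δ₀) * exp b * exp (-b * R.level a) := by
    rw [mul_right_comm]
    exact le_mul_of_one_le_right (by positivity) (one_le_exp hb)
  rcases (hA.2 a c).1 hac with hR | ⟨hl, -, hsd⟩
  · rcases hvert a c hR with hl | hl
    · calc dist p q ≤ δ₀ * exp (-b * R.level c) :=
            hexp.dist_le hδ₀ (hΦ.subset_of_adj hR.symm hl hp) hq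
        _ = δ₀ * exp b * exp (-b * R.level a) := by
            rw [mul_assoc, ← exp_add, hl]
            push_cast
            ring_nf
        _ ≤ _ := by gcongr; linarith
    · calc dist p q ≤ δ₀ * exp (-b * R.level a) :=
            hexp.dist_le hδ₀ hp (hΦ.subset_of_adj hR hl hq)
        _ ≤ (γ + 2 * δ₀) * exp (-b * R.level a) := by gcongr; linarith
        _ ≤ _ := hlift
  · have := dist_le_setDist_add hp hq (fun _ h => hexp.dist_le hδ₀ hp h)
      (fun _ h => hexp.dist_le hδ₀ hq h)
    rw [← hl] at this
    linarith

/-- Each step costs `e^{-b|level|}` and the level can drop by at most one per step, so the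
cost of a walk is dominated by a geometric series ending at `c`. -/
lemma dist_le_of_walk (hA : R.IsAIb R' Φ b γ) (hvert : R.Vertical) (hΦ : R.IsIndexMap Φ)
    (hb : 0 < b) (hγ : 0 ≤ γ) (hδ₀ : 0 ≤ δ₀) (hexp : R.ExpType Φ b δ₀) {u c : X}
    (w : R'.G.Walk u c) {p q : M} (hp : p ∈ Φ u) (hq : q ∈ Φ c) :
    dist p q ≤
      (γ + 2 * δ₀) * exp b / (1 - exp (-b)) * exp (-b * (R.level c - w.length)) := by
  set K := (γ + 2 * δ₀) * exp b
  set r := exp (-b)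
  have hr : 0 < 1 - r := one_sub_exp_neg_pos hb
  have hδK : δ₀ ≤ K / (1 - r) := by
    rw [le_div_iff₀ hr]
    nlinarith [one_le_exp hb.le, exp_pos (-b)]
  induction w generalizing p with
  | nil =>
    rw [Walk.length_nil, Nat.cast_zero, sub_zero]
    exact (hexp.dist_le hδ₀ hp hq).trans (by gcongr)
  | @cons u z c hadj w ih =>
    obtain ⟨s, hs⟩ := hΦ.2.1 z
    have hlev : (R.level c : ℝ) ≤ R.level u + (w.length + 1) :=
      mod_cast hA.level_le_add_length hvert (.cons hadj w)
    set E := exp (-b * (R.level c - (w.length + 1)))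
    have hu : exp (-b * R.level u) ≤ E := exp_le_exp.2 (by nlinarith)
    have hw : exp (-b * (R.level c - w.length)) = r * E := by
      rw [← exp_add]
      ring_nf
    push_cast [Walk.length_cons]
    calc dist p q ≤ dist p s + dist s q := dist_triangle p s q
      _ ≤ K * E + K / (1 - r) * (r * E) := by
        gcongr
        · exact (hA.dist_le_of_adj hvert hΦ hb.le hγ hδ₀ hexp hadj hp hs).trans (by gcongr)
        · exact hw ▸ ih hs hq
      _ = K / (1 - r) * E := by
        field_simp
        ring

/-- Split a geodesic from `x` to `y` at the vertex where the two climbing estimates balance. -/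
lemma setDist_le_exp_neg_gp (hA : R.IsAIb R' Φ b γ) (hvert : R.Vertical) (hΦ : R.IsIndexMap Φ)
    (hb : 0 < b) (hγ : 0 ≤ γ) (hδ₀ : 0 ≤ δ₀) (hexp : R.ExpType Φ b δ₀) (x y : X) :
    setDist (Φ x) (Φ y) ≤
      2 * exp b * ((γ + 2 * δ₀) * exp b / (1 - exp (-b))) * exp (-b * R'.gp x y) := by
  set K := (γ + 2 * δ₀) * exp b / (1 - exp (-b))
  obtain ⟨w, hw⟩ := R'.conn.exists_walk_length_eq_dist x y
  have hxy := hA.level_le_add_length hvert w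
  have hyx := hA.level_le_add_length hvert w.reverse
  rw [Walk.length_reverse] at hyx
  obtain ⟨L, hL⟩ : ∃ L, w.length = L := ⟨_, rfl⟩
  obtain ⟨j, hj⟩ : ∃ j, j = (R.level x + L - R.level y) / 2 := ⟨_, rfl⟩
  have hjL : j ≤ L := by omega
  have hj₁ : 2 * j + R.level y ≤ R.level x + L := by omega
  have hj₂ : R.level x + L ≤ 2 * j + 1 + R.level y := by omega
  have hj₁' : 2 * (j : ℝ) + R.level y ≤ R.level x + L := mod_cast hj₁
  have hj₂' : (R.level x : ℝ) + L ≤ 2 * j + 1 + R.level y := mod_cast hj₂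
  have hgp : R'.gp x y = (R.level x + R.level y - L) / 2 := by
    rw [gp, hA.level_eq hvert, hA.level_eq hvert, ← hw, hL]
  obtain ⟨p, hp⟩ := hΦ.2.1 x
  obtain ⟨q, hq⟩ := hΦ.2.1 y
  obtain ⟨s, hs⟩ := hΦ.2.1 (w.getVert j)
  have h₁ := hA.dist_le_of_walk hvert hΦ hb hγ hδ₀ hexp (w.take j).reverse hs hp
  have h₂ := hA.dist_le_of_walk hvert hΦ hb hγ hδ₀ hexp (w.drop j) hs hq
  rw [Walk.length_reverse, Walk.take_length, hL, min_eq_left hjL] at h₁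
  rw [Walk.drop_length, hL, Nat.cast_sub hjL] at h₂
  have e₁ : exp (-b * (R.level x - j)) ≤ exp b * exp (-b * R'.gp x y) := by
    rw [← exp_add, hgp]
    exact exp_le_exp.2 (by nlinarith)
  have e₂ : exp (-b * (R.level y - (L - j))) ≤ exp b * exp (-b * R'.gp x y) := by
    rw [← exp_add, hgp]
    exact exp_le_exp.2 (by nlinarith)
  have hK : 0 ≤ K := by
    have := one_sub_exp_neg_pos hb
    positivity
  calc setDist (Φ x) (Φ y) ≤ dist p q := setDist_le_dist hp hq
    _ ≤ dist s p + dist s q := dist_triangle_left p q s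
    _ ≤ K * (exp b * exp (-b * R'.gp x y)) + K * (exp b * exp (-b * R'.gp x y)) := by
      gcongr
      · exact h₁.trans (by gcongr)
      · exact h₂.trans (by gcongr)
    _ = 2 * exp b * K * exp (-b * R'.gp x y) := by ring

lemma quasiDist_le_exp_neg_gp (hA : R.IsAIb R' Φ b γ) (hvert : R.Vertical)
    (hΦ : R.IsIndexMap Φ) (hb : 0 < b) (hγ : 0 ≤ γ) (hδ₀ : 0 ≤ δ₀)
    (hexp : R.ExpType Φ b δ₀) (x y : X) :
    R.quasiDist Φ b x y ≤
      (2 * exp b * ((γ + 2 * δ₀) * exp b / (1 - exp (-b))) + 2) * exp (-b * R'.gp x y) := by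
  have hx : exp (-b * R.level x) ≤ exp (-b * R'.gp x y) := by
    have := R'.gp_le_level_left x y
    rw [hA.level_eq hvert] at this
    exact exp_le_exp.2 (by nlinarith)
  have hy : exp (-b * R.level y) ≤ exp (-b * R'.gp x y) := by
    have := R'.gp_le_level_right x y
    rw [hA.level_eq hvert] at this
    exact exp_le_exp.2 (by nlinarith)
  have := hA.setDist_le_exp_neg_gp hvert hΦ hb hγ hδ₀ hexp x y
  rw [quasiDist]
  linarith

lemma dist_add_two_mul_le (hA : R.IsAIb R' Φ b γ) (hvert : R.Vertical) (hΦ : R.IsIndexMap Φ)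
    {x y : X} {n : ℕ} (hx : n ≤ R.level x) (hy : n ≤ R.level y)
    (hsd : setDist (Φ x) (Φ y) ≤ γ * exp (-b * n)) :
    R'.G.dist x y + 2 * n ≤ R.level x + R.level y + 1 := by
  simp only [← hA.level_eq hvert] at hx hy ⊢
  obtain ⟨x', hx'n, hxx'⟩ := R'.exists_ancestor hx
  obtain ⟨y', hy'n, hyy'⟩ := R'.exists_ancestor hy
  have hx'y' : R'.G.dist x' y' ≤ 1 := by
    rcases eq_or_ne x' y' with rfl | hne
    · simp
    refine (SimpleGraph.dist_eq_one_iff_adj.2 ((hA.2 _ _).2 (Or.inr ⟨?_, hne, ?_⟩))).le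
    · rw [← hA.level_eq hvert, ← hA.level_eq hvert, hx'n, hy'n]
    · calc setDist (Φ x') (Φ y') ≤ setDist (Φ x) (Φ y) :=
            setDist_anti (hΦ.2.1 x) (hΦ.2.1 y) (hA.subset_of_mem_J hvert hΦ hxx')
              (hA.subset_of_mem_J hvert hΦ hyy')
        _ ≤ γ * exp (-b * R.level x') := by rwa [← hA.level_eq hvert, hx'n]
  have t₁ := R'.conn.dist_triangle (u := x) (v := x') (w := y)
  have t₂ := R'.conn.dist_triangle (u := x') (v := y') (w := y)
  rw [SimpleGraph.dist_comm (u := x) (v := x')] at t₁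
  have := hxx'.2
  have := hyy'.2
  omega

/-- Take `n` maximal with `dist(Φx, Φy) ≤ γe^{-bn}`: the ancestors at level `n` are adjacent,
so `(x|y) ≥ n - 1/2`. -/
lemma exp_neg_gp_le (hA : R.IsAIb R' Φ b γ) (hvert : R.Vertical) (hΦ : R.IsIndexMap Φ)
    (hb : 0 ≤ b) (hγ : 0 < γ) (x y : X) :
    exp (-b * R'.gp x y) ≤ exp (2 * b) * (1 + γ⁻¹) * R.quasiDist Φ b x y := by
  set d := setDist (Φ x) (Φ y)
  set μ := min (R.level x) (R.level y)
  have hclose : ∀ n : ℕ, n ≤ μ → d ≤ γ * exp (-b * n) →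
      exp (-b * R'.gp x y) ≤ exp (2 * b) * exp (-b * (n + 1 : ℕ)) := by
    intro n hn hd
    have h := hA.dist_add_two_mul_le hvert hΦ (hn.trans (min_le_left _ _))
      (hn.trans (min_le_right _ _)) hd
    have h' : (R'.G.dist x y : ℝ) + 2 * n ≤ R.level x + R.level y + 1 := mod_cast h
    have : (n : ℝ) - 1 / 2 ≤ R'.gp x y := by
      rw [gp, hA.level_eq hvert, hA.level_eq hvert]
      linarith
    rw [← exp_add]
    push_cast
    exact exp_le_exp.2 (by nlinarith)
  have hex : ∃ n : ℕ, γ * exp (-b * n) < d ∨ μ < n := ⟨μ + 1, Or.inr μ.lt_succ_self⟩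
  set N := Nat.find hex
  have hN : exp (-b * R'.gp x y) ≤ exp (2 * b) * exp (-b * N) := by
    rcases Nat.eq_zero_or_eq_succ_pred N with h0 | hk
    · rw [h0, Nat.cast_zero, mul_zero, exp_zero, mul_one]
      calc exp (-b * R'.gp x y) ≤ 1 := exp_le_one_iff.2 (by nlinarith [R'.gp_nonneg x y])
        _ ≤ exp (2 * b) := one_le_exp (by linarith)
    · have hmin := Nat.find_min hex (m := N.pred) (by omega)
      push Not at hmin
      rw [hk]
      exact hclose _ hmin.2 hmin.1
  have hd : exp (-b * N) ≤ γ⁻¹ * d + exp (-b * R.level x) + exp (-b * R.level y) := by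
    have := mul_nonneg (inv_pos.2 hγ).le (setDist_nonneg (Φ x) (Φ y))
    have := exp_pos (-b * R.level x)
    have := exp_pos (-b * R.level y)
    rcases Nat.find_spec hex with h | h
    · have : exp (-b * N) ≤ γ⁻¹ * d := by
        rw [le_inv_mul_iff₀ hγ]
        exact h.le
      linarith
    · have : exp (-b * N) ≤ exp (-b * μ) := exp_le_exp.2 (by
        have : (μ : ℝ) ≤ N := mod_cast h.le
        nlinarith)
      rcases min_choice (R.level x) (R.level y) with hμ | hμ <;>
        rw [show μ = _ from hμ] at this <;> linarith
  have := setDist_nonneg (Φ x) (Φ y)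
  have := exp_pos (-b * R.level x)
  have := exp_pos (-b * R.level y)
  have := inv_pos.2 hγ
  calc exp (-b * R'.gp x y) ≤ exp (2 * b) * exp (-b * N) := hN
    _ ≤ exp (2 * b) * (γ⁻¹ * d + exp (-b * R.level x) + exp (-b * R.level y)) := by gcongr
    _ ≤ exp (2 * b) * (1 + γ⁻¹) * R.quasiDist Φ b x y := by
      rw [mul_assoc, quasiDist]
      gcongr
      nlinarith

theorem hyperbolic (hA : R.IsAIb R' Φ b γ) (hvert : R.Vertical) (hΦ : R.IsIndexMap Φ)
    (hb : 0 < b) (hγ : 0 < γ) (hδ₀ : 0 ≤ δ₀) (hexp : R.ExpType Φ b δ₀) :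
    R'.Hyperbolic := by
  set C := 2 * exp b * ((γ + 2 * δ₀) * exp b / (1 - exp (-b))) + 2
  refine R'.hyperbolic_of_exp_neg_gp_le hb
    (K := exp (2 * b) * (1 + γ⁻¹) * (1 + δ₀) * C) fun x y z => ?_
  calc exp (-b * R'.gp x y) ≤ exp (2 * b) * (1 + γ⁻¹) * R.quasiDist Φ b x y :=
        hA.exp_neg_gp_le hvert hΦ hb.le hγ x y
    _ ≤ exp (2 * b) * (1 + γ⁻¹) * ((1 + δ₀) *
          (R.quasiDist Φ b x z + R.quasiDist Φ b z y)) := by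
        gcongr
        exact R.quasiDist_le_mul_add hΦ hexp hδ₀ x y z
    _ ≤ exp (2 * b) * (1 + γ⁻¹) * ((1 + δ₀) *
          (C * exp (-b * R'.gp x z) + C * exp (-b * R'.gp z y))) := by
        gcongr <;> exact hA.quasiDist_le_exp_neg_gp hvert hΦ hb hγ.le hδ₀ hexp _ _
    _ = _ := by ring

end RootedGraph.IsAIb

theorem AIb_departing_hyperbolic_general {X M : Type*} [MetricSpace M]
    (R R' : RootedGraph X) (Φ : X → Set M)
    (hvert : R.Vertical) (hΦ : R.IsIndexMap Φ)
    (b γ δ₀ : ℝ) (hb : 0 < b) (hγ : 0 < γ) (hδ₀ : 0 ≤ δ₀)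
    (hexp : R.ExpType Φ b δ₀)
    (hA : R.IsAIb R' Φ b γ)
    (m : ℕ) (hmb : (2 * γ + δ₀) * Real.exp (-b * m) ≤ γ) :
    R'.Departing m 1 ∧ R'.Hyperbolic :=
  ⟨hA.departing hvert hΦ hγ.le hδ₀ hexp hmb, hA.hyperbolic hvert hΦ hb hγ hδ₀ hexp⟩

/-- part of Theorem 4.5: the AI_b-graph of an index map of exponential
type-(b) is `(m,1)`-departing for any `m` with `(2γ+δ₀)e^{-bm} ≤ γ`, hence hyperbolic. -/
theorem AIb_departing_hyperbolic {X M : Type*} [MetricSpace M] [CompleteSpace M]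
    (R R' : RootedGraph X) (Φ : X → Set M)
    (hvert : R.Vertical) (hΦ : R.IsIndexMap Φ)
    (b γ δ₀ : ℝ) (hb : 0 < b) (hγ : 0 < γ) (hδ₀ : 0 ≤ δ₀)
    (hexp : R.ExpType Φ b δ₀)
    (hA : R.IsAIb R' Φ b γ)
    (m : ℕ) (hm : 1 ≤ m) (hmb : (2 * γ + δ₀) * Real.exp (-b * m) ≤ γ) :
    R'.Departing m 1 ∧ R'.Hyperbolic :=
  AIb_departing_hyperbolic_general R R' Φ hvert hΦ b γ δ₀ hb hγ hδ₀ hexp hA m hmb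
end

section
/- Let Φ be an index map of exponential type-(b) with attractor K, and suppose (K,ρ) is a doubling metric space. Then condition (S_b) holds if and only if condition (S_b') holds: there exist c_1 > 0 and ℓ_1 such that for all n ≥ 0 and all ξ ∈ K, #{x ∈ X_n : K_x ∩ B(ξ, c_1 e^{−bn}) ≠ ∅} ≤ ℓ_1. -/
open SimpleGraph Metric
open scoped ENNReal ENat

/-!
A ball of radius `e^{-bn}` has diameter `< 3e^{-bn}`, so `(S_b)` with `c = 3` gives `(S_b')` with
`c₁ = 1`. Conversely, a set `F` of diameter `< ce^{-bn}` meeting `K` lies in a ball of radius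
`ce^{-bn}` centred in `K`; `j` applications of the doubling property cover it by `ℓ^j` balls of
radius `ce^{-bn}/2^j ≤ c₁e^{-bn}` centred in `K`, each meeting at most `ℓ₁` cells of level `n`.
Level sets are finite because the graph is locally finite, so the union bound applies.
-/

namespace RootedGraph

variable {X : Type*} (R : RootedGraph X)

theorem finite_setOf_level_le (n : ℕ) : {x | R.level x ≤ n}.Finite := by
  induction n with
  | zero =>
    refine (Set.finite_singleton R.root).subset fun x (hx : R.G.dist R.root x ≤ 0) => ?_
    exact ((R.conn R.root x).dist_eq_zero_iff.mp (Nat.le_zero.mp hx)).symm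
  | succ n ih =>
    refine (ih.union (ih.biUnion fun y _ => R.locFin y)).subset fun x hx => ?_
    obtain ⟨p, hp⟩ := (R.conn x R.root).exists_walk_length_eq_dist
    cases p with
    | nil => exact Or.inl (by simp [level])
    | @cons _ y _ hxy q =>
      -- a shortest walk from `x` back to the root passes through a neighbour of lower level
      have hy : R.level y ≤ n := by
        have hq : R.G.dist y R.root ≤ q.length := SimpleGraph.dist_le q
        have hx' : R.G.dist x R.root ≤ n + 1 := by rwa [SimpleGraph.dist_comm]
        simp only [SimpleGraph.Walk.length_cons] at hp
        rw [level, SimpleGraph.dist_comm]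
        omega
      exact Or.inr (Set.mem_biUnion hy hxy.symm)

theorem finite_setOf_level_eq (n : ℕ) : {x | R.level x = n}.Finite :=
  (R.finite_setOf_level_le n).subset fun _ hx => le_of_eq hx

end RootedGraph

theorem ncard_setOf_inter_nonempty_le_mul {X M : Type*} {p : X → Prop} (hp : {x | p x}.Finite)
    (A : X → Set M) {F : Set M} {s : Finset M} {U : M → Set M} {ℓ : ℕ}
    (hcov : ∀ x, A x ∩ F ⊆ ⋃ η ∈ s, U η)
    (hU : ∀ η ∈ s, {x | p x ∧ (A x ∩ U η).Nonempty}.ncard ≤ ℓ) :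
    {x | p x ∧ (A x ∩ F).Nonempty}.ncard ≤ s.card * ℓ := by
  have hsub : {x | p x ∧ (A x ∩ F).Nonempty} ⊆
      ⋃ η ∈ s, {x | p x ∧ (A x ∩ U η).Nonempty} := by
    rintro x ⟨hpx, q, hq⟩
    obtain ⟨η, hη, hqη⟩ := Set.mem_iUnion₂.mp (hcov x hq)
    exact Set.mem_iUnion₂.mpr ⟨η, hη, hpx, q, hq.1, hqη⟩
  calc {x | p x ∧ (A x ∩ F).Nonempty}.ncard
      ≤ (⋃ η ∈ s, {x | p x ∧ (A x ∩ U η).Nonempty}).ncard :=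
        Set.ncard_le_ncard hsub (hp.subset (Set.iUnion₂_subset fun _ _ _ hx => hx.1))
    _ ≤ ∑ η ∈ s, {x | p x ∧ (A x ∩ U η).Nonempty}.ncard := s.set_ncard_biUnion_le _
    _ ≤ s.card * ℓ := Finset.sum_le_card_nsmul _ _ _ hU

section Doubling

variable {M : Type*} [MetricSpace M] {K : Set M} {ℓ : ℕ}

theorem exists_finset_cover_ball_div_two_pow
    (hdbl : ∀ ξ ∈ K, ∀ r : ℝ, ∃ s : Finset M, ↑s ⊆ K ∧ s.card ≤ ℓ ∧
      ball ξ r ∩ K ⊆ ⋃ η ∈ s, ball η (r / 2)) (j : ℕ) :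
    ∀ ξ ∈ K, ∀ r : ℝ, ∃ s : Finset M, ↑s ⊆ K ∧ s.card ≤ ℓ ^ j ∧
      ball ξ r ∩ K ⊆ ⋃ η ∈ s, ball η (r / 2 ^ j) := by
  classical
  induction j with
  | zero => exact fun ξ hξ r => ⟨{ξ}, by simpa using hξ, by simp, fun q hq => by simpa using hq.1⟩
  | succ j ih =>
    intro ξ hξ r
    obtain ⟨s, hsK, hscard, hscov⟩ := hdbl ξ hξ r
    choose! t htK htcard htcov using fun η (hη : η ∈ s) => ih η (hsK hη) (r / 2)
    refine ⟨s.biUnion t, ?_, ?_, fun q hq => ?_⟩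
    · simpa only [Finset.coe_biUnion, Set.iUnion₂_subset_iff, Finset.mem_coe] using htK
    · calc (s.biUnion t).card ≤ s.card * ℓ ^ j := Finset.card_biUnion_le_card_mul _ _ _ htcard
        _ ≤ ℓ ^ (j + 1) := by rw [pow_succ']; gcongr
    · obtain ⟨η, hη, hqη⟩ := Set.mem_iUnion₂.mp (hscov hq)
      obtain ⟨μ, hμ, hqμ⟩ := Set.mem_iUnion₂.mp (htcov η hη ⟨hqη, hq.2⟩)
      rw [div_div, ← pow_succ'] at hqμ
      exact Set.mem_iUnion₂.mpr ⟨μ, Finset.mem_biUnion.mpr ⟨η, hη, hμ⟩, hqμ⟩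

theorem exists_finset_cover_of_ediam_lt
    (hdbl : ∀ ξ ∈ K, ∀ r : ℝ, ∃ s : Finset M, ↑s ⊆ K ∧ s.card ≤ ℓ ∧
      ball ξ r ∩ K ⊆ ⋃ η ∈ s, ball η (r / 2)) (j : ℕ) {F : Set M} {r : ℝ}
    (hF : ediam F < ENNReal.ofReal r) :
    ∃ s : Finset M, ↑s ⊆ K ∧ s.card ≤ ℓ ^ j ∧ F ∩ K ⊆ ⋃ η ∈ s, ball η (r / 2 ^ j) := by
  rcases (F ∩ K).eq_empty_or_nonempty with hFK | ⟨q₀, hq₀F, hq₀K⟩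
  · exact ⟨∅, by simp, by simp, by simp [hFK]⟩
  obtain ⟨s, hsK, hscard, hscov⟩ := exists_finset_cover_ball_div_two_pow hdbl j q₀ hq₀K r
  refine ⟨s, hsK, hscard, fun q hq => hscov ⟨?_, hq.2⟩⟩
  rw [Metric.mem_ball, ← edist_lt_ofReal]
  exact (edist_le_ediam_of_mem hq.1 hq₀F).trans_lt hF

end Doubling

theorem condS_iff_condS'_general {X M : Type*} [MetricSpace M]
    (R : RootedGraph X) (Φ : X → Set M)
    (b : ℝ)
    (hdbl : ∃ ℓ : ℕ, ∀ ξ ∈ R.attractor Φ, ∀ r : ℝ, ∃ s : Finset M,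
      ↑s ⊆ R.attractor Φ ∧ s.card ≤ ℓ ∧
        Metric.ball ξ r ∩ R.attractor Φ ⊆ ⋃ η ∈ s, Metric.ball η (r / 2)) :
    R.CondS Φ b ↔
      ∃ c₁ : ℝ, 0 < c₁ ∧ ∃ ℓ₁ : ℕ, ∀ (n : ℕ), ∀ ξ ∈ R.attractor Φ,
        Set.ncard {x | R.level x = n ∧
          ((Φ x ∩ R.attractor Φ) ∩ Metric.ball ξ (c₁ * Real.exp (-b * n))).Nonempty} ≤ ℓ₁ := by
  constructor
  · intro hS
    obtain ⟨ℓ, hℓ⟩ := hS 3 three_pos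
    refine ⟨1, one_pos, ℓ, fun n ξ _ => hℓ n _ ?_⟩
    have he := Real.exp_pos (-b * n)
    calc ediam (ball ξ (1 * Real.exp (-b * n)))
        ≤ 2 * ENNReal.ofReal (1 * Real.exp (-b * n)) := by
          rw [← eball_ofReal]; exact ediam_eball_le
      _ = ENNReal.ofReal (2 * Real.exp (-b * n)) := by
          rw [ENNReal.ofReal_mul zero_le_two, one_mul, ENNReal.ofReal_ofNat]
      _ < ENNReal.ofReal (3 * Real.exp (-b * n)) :=
          (ENNReal.ofReal_lt_ofReal_iff (by positivity)).mpr (by linarith)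
  · rintro ⟨c₁, hc₁, ℓ₁, hℓ₁⟩ c -
    obtain ⟨ℓ, hℓ⟩ := hdbl
    obtain ⟨j, hj⟩ := pow_unbounded_of_one_lt (c / c₁) one_lt_two
    refine ⟨ℓ ^ j * ℓ₁, fun n F hF => ?_⟩
    obtain ⟨s, hsK, hscard, hscov⟩ := exists_finset_cover_of_ediam_lt hℓ j hF
    have hrad : c * Real.exp (-b * n) / 2 ^ j ≤ c₁ * Real.exp (-b * n) := by
      rw [div_le_iff₀ (by positivity), mul_right_comm]
      exact mul_le_mul_of_nonneg_right ((div_lt_iff₀' hc₁).mp hj).le (Real.exp_pos _).le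
    calc _ ≤ s.card * ℓ₁ := ncard_setOf_inter_nonempty_le_mul (R.finite_setOf_level_eq n) _
          (fun _ q hq => Set.iUnion₂_mono (fun η _ => ball_subset_ball hrad)
            (hscov ⟨hq.2, hq.1.2⟩))
          (fun η hη => hℓ₁ n η (hsK hη))
      _ ≤ ℓ ^ j * ℓ₁ := Nat.mul_le_mul_right _ hscard

/-- Proposition 5.3, (i) ⇔ (ii): if the attractor `(K,ρ)` is doubling,
then condition `(S_b)` is equivalent to condition `(S_b')`. -/
theorem condS_iff_condS' {X M : Type*} [MetricSpace M] [CompleteSpace M]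
    (R : RootedGraph X) (Φ : X → Set M)
    (hvert : R.Vertical) (hΦ : R.IsIndexMap Φ)
    (b δ₀ : ℝ) (hb : 0 < b) (hδ₀ : 0 ≤ δ₀)
    (hexp : R.ExpType Φ b δ₀)
    (hdbl : ∃ ℓ : ℕ, ∀ ξ ∈ R.attractor Φ, ∀ r : ℝ, ∃ s : Finset M,
      ↑s ⊆ R.attractor Φ ∧ s.card ≤ ℓ ∧
        Metric.ball ξ r ∩ R.attractor Φ ⊆ ⋃ η ∈ s, Metric.ball η (r / 2)) :
    R.CondS Φ b ↔
      ∃ c₁ : ℝ, 0 < c₁ ∧ ∃ ℓ₁ : ℕ, ∀ (n : ℕ), ∀ ξ ∈ R.attractor Φ,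
        Set.ncard {x | R.level x = n ∧
          ((Φ x ∩ R.attractor Φ) ∩ Metric.ball ξ (c₁ * Real.exp (-b * n))).Nonempty} ≤ ℓ₁ :=
  condS_iff_condS'_general R Φ b hdbl
end
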